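/- arXiv:1505.02985 — 2 statements merged into one kernel-verified Lean document; each statement's English description precedes it below -/
import Mathlib

section
/- Assume that d+ > d− > 0 satisfy d+ − d− ≥ c√(d+ ln d+), where c > 0 is a sufficiently large absolute constant and d+ is bounded below by a sufficiently large absolute constant. Then the operator T = T_{d+,d−} has a unique skewed fixed point p*, and the iterates T^t(0,0,1) (starting from the point mass at 1) converge to p* as t → ∞. -/
open Filter Topology

attribute [local instance] Classical.propDecidable

set_option linter.unusedVariables false

noncomputable section


/-! ### Basic functions -/

/-- The clamping function `ψ` restricted to the integers. -/
def psiZ (x : ℤ) : ℤ := max (-1) (min 1 x)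

/-- The threshold function `ψ̃` restricted to the integers. -/
def tpsiZ (x : ℤ) : ℤ := if x ≤ -1 then -1 else 1

/-- `p : ℤ → ℝ` represents a probability measure on `{-1, 0, 1}`. -/
def IsProbOn3 (p : ℤ → ℝ) : Prop :=
  (∀ z, 0 ≤ p z) ∧ (∀ z : ℤ, z ∉ ({-1, 0, 1} : Set ℤ) → p z = 0) ∧ p (-1) + p 0 + p 1 = 1

/-- `p` is skewed: `p(1) ≥ 1 - d₊⁻¹⁰`. -/
def Skewed (dp : ℝ) (p : ℤ → ℝ) : Prop := 1 - (dp ^ 10)⁻¹ ≤ p 1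

/-- The point mass at `1`, i.e. `(0,0,1)`. -/
def delta1 : ℤ → ℝ := fun z => if z = 1 then 1 else 0

/-! ### The operator `T` -/

/-- Convolution of two mass functions on `ℤ`. -/
def convZ (a b : ℤ → ℝ) : ℤ → ℝ := fun z => ∑' w : ℤ, a w * b (z - w)

/-- `n`-fold convolution power (distribution of a sum of `n` i.i.d. copies). -/
def convPow (a : ℤ → ℝ) : ℕ → ℤ → ℝ
  | 0 => fun z => if z = 0 then 1 else 0
  | n + 1 => convZ (convPow a n) a

/-- Poisson mass function with mean `d`. -/
def poisP (d : ℝ) (k : ℕ) : ℝ := Real.exp (-d) * d ^ k / (Nat.factorial k)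

/-- Distribution of `-η` when `η` has distribution `a`. -/
def flipM (a : ℤ → ℝ) : ℤ → ℝ := fun z => a (-z)

/-- The distribution of `Z_p = ∑_{i=1}^{γ₊} η_i - ∑_{i=γ₊+1}^{γ₊+γ₋} η_i` where the `η_i`
are i.i.d. with distribution `p` and `γ₊ ~ Po(d₊)`, `γ₋ ~ Po(d₋)` are independent. -/
def Zdist (dp dm : ℝ) (p : ℤ → ℝ) : ℤ → ℝ := fun z =>
  ∑' k : ℕ, ∑' l : ℕ, poisP dp k * poisP dm l * convZ (convPow p k) (convPow (flipM p) l) z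

/-- The operator `𝒯 = 𝒯_{d₊,d₋}`: the distribution of `ψ(Z_p)`. -/
def Twp (dp dm : ℝ) (p : ℤ → ℝ) : ℤ → ℝ := fun z =>
  if z = 1 then ∑' m : ℕ, Zdist dp dm p (1 + (m : ℤ))
  else if z = 0 then Zdist dp dm p 0
  else if z = -1 then ∑' m : ℕ, Zdist dp dm p (-1 - (m : ℤ))
  else 0

/-- The value `Z` as a function of the outcomes `η : Fin (k+l) → ℤ`, where the first `k`
coordinates form the `γ₊`-group and the remaining `l` the `γ₋`-group. -/
def zsum (k l : ℕ) (η : Fin (k + l) → ℤ) : ℤ :=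
  (∑ j ∈ Finset.univ.filter (fun j : Fin (k + l) => (j : ℕ) < k), η j)
    - ∑ j ∈ Finset.univ.filter (fun j : Fin (k + l) => k ≤ (j : ℕ)), η j

/-- Conditional expectation of
`∑_{i=1}^{γ₊} 1{η_i = -ψ̃(Z)} + ∑_{i=γ₊+1}^{γ₊+γ₋} 1{η_i = ψ̃(Z)}` given `γ₊ = k, γ₋ = l`. -/
def innerPhi (p : ℤ → ℝ) (k l : ℕ) : ℝ :=
  ∑ η ∈ Fintype.piFinset (fun _ : Fin (k + l) => ({-1, 0, 1} : Finset ℤ)),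
    (∏ i, p (η i)) *
      (((Finset.univ.filter (fun i : Fin (k + l) =>
            (i : ℕ) < k ∧ η i = - tpsiZ (zsum k l η))).card : ℝ)
        + ((Finset.univ.filter (fun i : Fin (k + l) =>
            k ≤ (i : ℕ) ∧ η i = tpsiZ (zsum k l η))).card : ℝ))

/-- The functional `φ_{d₊,d₋}`. -/
def phiOp (dp dm : ℝ) (p : ℤ → ℝ) : ℝ :=
  (1 / 2) * ∑' k : ℕ, ∑' l : ℕ, poisP dp k * poisP dm l * innerPhi p k l

/-! ### The L¹-Wasserstein distance on measures on `{-1,0,1}` -/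

/-- `ℓ₁(p,q)`: infimum of `E |X - Y|` over couplings of `p` and `q`. -/
def ell1 (p q : ℤ → ℝ) : ℝ :=
  sInf { r | ∃ ν : ℤ × ℤ → ℝ, (∀ x y, 0 ≤ ν (x, y)) ∧
    (∀ x, ∑ y ∈ ({-1, 0, 1} : Finset ℤ), ν (x, y) = p x) ∧
    (∀ y, ∑ x ∈ ({-1, 0, 1} : Finset ℤ), ν (x, y) = q y) ∧
    r = ∑ x ∈ ({-1, 0, 1} : Finset ℤ), ∑ y ∈ ({-1, 0, 1} : Finset ℤ),
          |(x : ℝ) - (y : ℝ)| * ν (x, y) }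





/-! ### Graphs: restriction, cuts, the core, Warning Propagation -/

/-- Every neighbourhood in a graph on a finite vertex type is finite. -/
noncomputable instance fintypeNeighborSet {V : Type*} [Fintype V] (G : SimpleGraph V) (v : V) :
    Fintype (G.neighborSet v) := Fintype.ofFinite _

/-- The subgraph of `G` consisting of the edges inside `S` (the induced subgraph on `S`,
viewed as a graph on the ambient vertex set; vertices outside `S` are isolated). -/
def restrictG {V : Type*} (G : SimpleGraph V) (S : Set V) : SimpleGraph V where
  Adj x y := G.Adj x y ∧ x ∈ S ∧ y ∈ S
  symm := ⟨fun x y h => ⟨G.adj_symm h.1, h.2.2, h.2.1⟩⟩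
  loopless := ⟨fun x h => G.irrefl h.1⟩

/-- `cut(G, σ)` for the boundary condition `σ` on `U`: the least number of edges of `G` joining
vertices of different colours, over all `±1`-colourings `τ` agreeing with `σ` on `U`.
(The set of ordered pairs of adjacent bichromatic vertices has twice the size of the
corresponding edge set.) -/
def cutW {V : Type*} (G : SimpleGraph V) (U : Set V) (σ : V → ℤ) : ℕ :=
  sInf { k | ∃ τ : V → ℤ, (∀ x, τ x = 1 ∨ τ x = -1) ∧ (∀ x ∈ U, τ x = σ x) ∧
    2 * k = {p : V × V | G.Adj p.1 p.2 ∧ τ p.1 ≠ τ p.2}.ncard }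

/-- The defining property of the core. -/
def CoreProp {V : Type*} (G : SimpleGraph V) (σ : V → ℤ) (dp dm c : ℝ) (U : Set V) : Prop :=
  ∀ u ∈ U,
    |(({w | G.Adj u w ∧ σ u * σ w = 1}.ncard : ℝ) - dp)| ≤ c / 4 * Real.sqrt (dp * Real.log dp) ∧
    |(({w | G.Adj u w ∧ σ u * σ w = -1}.ncard : ℝ) - dm)| ≤ c / 4 * Real.sqrt (dp * Real.log dp) ∧
    ({w | G.Adj u w} \ U).ncard ≤ 100

/-- The core: the largest subset satisfying `CoreProp`, i.e. the union of all such subsets. -/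
def coreSet {V : Type*} (G : SimpleGraph V) (σ : V → ℤ) (dp dm c : ℝ) : Set V :=
  ⋃₀ { U | CoreProp G σ dp dm c U }

/-- The sets `C_v^{(t)}`. -/
def CvStage {V : Type*} (G : SimpleGraph V) (K : Set V) (v : V) : ℕ → Set V
  | 0 => {v} ∪ {w | G.Adj v w}
  | t + 1 => CvStage G K v t ∪ ⋃ u ∈ (CvStage G K v t \ K), {w | G.Adj u w}

/-- The set `C_v = ⋃_t C_v^{(t)}`. -/
def CvSet {V : Type*} (G : SimpleGraph V) (K : Set V) (v : V) : Set V :=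
  ⋃ t, CvStage G K v t

/-- Warning Propagation messages `μ_{v→w}(t | G, σ)` with initial condition `σ` on `U`. -/
def wpMsg {V : Type*} (G : SimpleGraph V) [∀ v : V, Fintype (G.neighborSet v)]
    (U : Set V) (σ : V → ℤ) : ℕ → V → V → ℤ
  | 0, v, _ => if v ∈ U then σ v else 0
  | t + 1, v, w => psiZ (∑ u ∈ (G.neighborFinset v).erase w, wpMsg G U σ t u v)

/-- `μ_v(t|G,σ) = ∑_{w ∈ ∂v} μ_{w→v}(t|G,σ)`. -/
def wpVal {V : Type*} (G : SimpleGraph V) [∀ v : V, Fintype (G.neighborSet v)]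
    (U : Set V) (σ : V → ℤ) (t : ℕ) (v : V) : ℤ :=
  ∑ w ∈ G.neighborFinset v, wpMsg G U σ t w v

/-- The maximum distance from `w` to any vertex reachable from `w` in `G`. -/
def hgt {V : Type*} (G : SimpleGraph V) (w : V) : ℕ :=
  sSup ((G.dist w) '' { u | G.Reachable w u })

/-- `G_v`: the subgraph of `G` induced on `C_v` (ambient form). -/
def GvG {V : Type*} (G : SimpleGraph V) (K : Set V) (v : V) : SimpleGraph V :=
  restrictG G (CvSet G K v)

/-- `w_{↑v}`: the neighbour of `w` on the path from `w` to `v` in `G_v`. -/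
def parentOf {V : Type*} (G : SimpleGraph V) (K : Set V) (v w : V) : V :=
  @Classical.epsilon V ⟨v⟩ fun x =>
    (GvG G K v).Adj w x ∧ (GvG G K v).dist x v + 1 = (GvG G K v).dist w v

/-- `G_v` with the edge `{w, w_{↑v}}` removed. -/
def GdelG {V : Type*} (G : SimpleGraph V) (K : Set V) (v w : V) : SimpleGraph V :=
  (GvG G K v).deleteEdges {s(w, parentOf G K v w)}

/-- `h_{w→v}`: the maximum distance between `w` and any other vertex of `G_{w→v}`. -/
def hdir {V : Type*} (G : SimpleGraph V) (K : Set V) (v w : V) : ℕ :=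
  hgt (GdelG G K v w) w

/-- `C_{w→v}`: the vertex set of the component of `w` in `G_v` minus the edge `{w, w_{↑v}}`. -/
def Cdir {V : Type*} (G : SimpleGraph V) (K : Set V) (v w : V) : Set V :=
  { u | (GdelG G K v w).Reachable w u }

/-- `G_{w→v}`: the component of `w` in `G_v` minus the edge `{w, w_{↑v}}`. -/
def Gdir {V : Type*} (G : SimpleGraph V) (K : Set V) (v w : V) : SimpleGraph V :=
  restrictG (GdelG G K v w) (Cdir G K v w)

/-- `h_v`: the maximum distance between `v` and any other vertex of `G_v`. -/
def hvG {V : Type*} (G : SimpleGraph V) (K : Set V) (v : V) : ℕ :=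
  hgt (GvG G K v) v

/-- `μ*_{w→v} = μ_{w→w_{↑v}}(h_{w→v}+1 | G, σ)`. -/
def muStarDir {V : Type*} (G : SimpleGraph V) [∀ v : V, Fintype (G.neighborSet v)]
    (K : Set V) (σ : V → ℤ) (v w : V) : ℤ :=
  wpMsg G Set.univ σ (hdir G K v w + 1) w (parentOf G K v w)

/-- `μ*_v = μ_v(h_v+1 | G, σ)`. -/
def muStarV {V : Type*} (G : SimpleGraph V) [∀ v : V, Fintype (G.neighborSet v)]
    (K : Set V) (σ : V → ℤ) (v : V) : ℤ :=
  wpVal G Set.univ σ (hvG G K v + 1) v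

/-- The ball of radius `t` around `v` in `G`. -/
def ballSet {V : Type*} (G : SimpleGraph V) (v : V) (t : ℕ) : Set V :=
  { u | G.Reachable v u ∧ G.dist v u ≤ t }

lemma mem_ballSet_self {V : Type*} (G : SimpleGraph V) (v : V) (t : ℕ) : v ∈ ballSet G v t :=
  ⟨SimpleGraph.Reachable.refl v, by simp [SimpleGraph.dist_self]⟩

/-- `∂^t(G,r,σ) ≅ ∂^t(H,r',τ)`: a root- and label-preserving isomorphism between the
balls of radius `t`. -/
def RootedBallIso {V W : Type*} (G : SimpleGraph V) (σ : V → ℤ) (r : V)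
    (H : SimpleGraph W) (τ : W → ℤ) (r' : W) (t : ℕ) : Prop :=
  ∃ φ : (G.induce (ballSet G r t)) ≃g (H.induce (ballSet H r' t)),
    φ ⟨r, mem_ballSet_self G r t⟩ = ⟨r', mem_ballSet_self H r' t⟩ ∧
    ∀ x, τ (φ x).1 = σ x.1





/-! ### The planted bisection model -/

/-- `σ` is a balanced bipartition: the two class sizes differ by at most one. -/
def BalancedPart {n : ℕ} (σ : Fin n → Bool) : Prop :=
  (((Finset.univ.filter (fun v => σ v = true)).card : ℤ)
    - ((Finset.univ.filter (fun v => σ v = false)).card : ℤ)).natAbs ≤ 1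

/-- The number of balanced bipartitions of `Fin n`. -/
def Nbal (n : ℕ) : ℕ := (Finset.univ.filter (fun σ : Fin n → Bool => BalancedPart σ)).card

/-- The probability `p_{σ(v)σ(w)}` of the edge `{v,w}`, where `p₊ = 2d₊/n`, `p₋ = 2d₋/n`. -/
def pairProb (dp dm : ℝ) (n : ℕ) (σ : Fin n → Bool) (v w : Fin n) : ℝ :=
  if σ v = σ w then 2 * dp / n else 2 * dm / n

/-- The probability mass of an outcome `ω = (σ, g)` of the planted bisection model
`G(n, 2d₊/n, 2d₋/n)`: `σ` is a uniformly random balanced bipartition and, independently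
for each pair `v ≠ w`, the edge `{v,w}` is present with probability `p_{σ(v)σ(w)}`. -/
def pbMass (dp dm : ℝ) (n : ℕ) (ω : (Fin n → Bool) × (Fin n → Fin n → Bool)) : ℝ :=
  (if BalancedPart ω.1 ∧ (∀ v w, ω.2 v w = ω.2 w v) ∧ (∀ v, ω.2 v v = false)
    then ((Nbal n : ℝ))⁻¹ else 0) *
  ∏ p ∈ Finset.univ.filter (fun p : Fin n × Fin n => p.1 < p.2),
    (if ω.2 p.1 p.2 = true then pairProb dp dm n ω.1 p.1 p.2
      else 1 - pairProb dp dm n ω.1 p.1 p.2)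

/-- The probability of an event in the planted bisection model. -/
def pbPr (dp dm : ℝ) (n : ℕ) (A : (Fin n → Bool) × (Fin n → Fin n → Bool) → Prop) : ℝ :=
  ∑ ω ∈ Finset.univ.filter A, pbMass dp dm n ω

/-- Sign of a Boolean, as `±1`. -/
def sgnB (b : Bool) : ℤ := if b then 1 else -1

/-- The planted assignment `σ : [n] → {±1}` of an outcome. -/
def pbSigma {n : ℕ} (ω : (Fin n → Bool) × (Fin n → Fin n → Bool)) : Fin n → ℤ :=
  fun v => sgnB (ω.1 v)

/-- The graph of an outcome. -/
def pbGraph (n : ℕ) (g : Fin n → Fin n → Bool) : SimpleGraph (Fin n) :=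
  SimpleGraph.fromRel fun v w => g v w = true

/-- The minimum bisection width `bis(G)`: the least number of edges joining `S` and its
complement over all `S` with `||S| - |S̄|| ≤ 1`. -/
def bisWidth {n : ℕ} (G : SimpleGraph (Fin n)) : ℕ :=
  sInf { k | ∃ S : Finset (Fin n),
    ((S.card : ℤ) - ((n : ℤ) - (S.card : ℤ))).natAbs ≤ 1 ∧
    k = {p : Fin n × Fin n | G.Adj p.1 p.2 ∧ p.1 ∈ S ∧ p.2 ∉ S}.ncard }

/-! ### Finite rooted typed trees and the two-type Galton–Watson tree -/

/-- Finite rooted trees whose vertices carry a type in `ℤ` (used with types `±1`). -/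
inductive GWT : Type
  | node : ℤ → List GWT → GWT

instance : Inhabited GWT := ⟨.node 0 []⟩

/-- The type of the root. -/
def GWT.typeOf : GWT → ℤ
  | .node s _ => s

/-- The subtrees pending on the children of the root. -/
def GWT.childrenOf : GWT → List GWT
  | .node _ l => l

/-- Valid positions (vertices) of a tree, encoded as lists of child indices. -/
def GWT.valid : GWT → List ℕ → Prop
  | _, [] => True
  | T, i :: p => i < T.childrenOf.length ∧ GWT.valid (T.childrenOf.getD i default) p

/-- The type of the vertex at position `q`. -/
def GWT.typeAt : GWT → List ℕ → ℤ
  | T, [] => T.typeOf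
  | T, i :: p => GWT.typeAt (T.childrenOf.getD i default) p

/-- The tree as a simple graph on its set of positions. -/
def GWT.graph (T : GWT) : SimpleGraph { p : List ℕ // T.valid p } where
  Adj a b := (∃ i : ℕ, (b : List ℕ) = (a : List ℕ) ++ [i]) ∨
             (∃ i : ℕ, (a : List ℕ) = (b : List ℕ) ++ [i])
  symm := ⟨fun a b h => h.symm⟩
  loopless := ⟨fun a h => by
    rcases h with ⟨i, hi⟩ | ⟨i, hi⟩ <;>
      · have := congrArg List.length hi
        simp at this⟩

/-- The root of the tree. -/
def GWT.root (T : GWT) : { p : List ℕ // T.valid p } := ⟨[], trivial⟩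

/-- The type labelling of the vertices. -/
def GWT.lab (T : GWT) : { p : List ℕ // T.valid p } → ℤ := fun q => T.typeAt q.1

/-- The Warning Propagation message `μ_{r↑}(t)` sent by the root of a tree towards its
(imaginary) parent, when the messages are initialised with the types. -/
def GWT.rootMsg : ℕ → GWT → ℤ
  | 0, T => T.typeOf
  | t + 1, T => psiZ ((T.childrenOf.map (GWT.rootMsg t)).sum)

/-- The probability mass function of the depth-`t` truncation of the two-type Galton–Watson
tree with root type `s`, realised as a random *ordered* tree: the root spawns `Po(d₊ + d₋)`
children, each independently of type `s` with probability `d₊/(d₊+d₋)` and of type `-s`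
with probability `d₋/(d₊+d₋)`, and the subtrees pending on the children are independent
Galton–Watson trees truncated at depth `t-1`. -/
def ogwMass (dp dm : ℝ) : ℕ → ℤ → GWT → ℝ
  | 0, s, T => if T.typeOf = s ∧ T.childrenOf = [] then 1 else 0
  | t + 1, s, T =>
    if T.typeOf = s then
      Real.exp (-(dp + dm)) / (Nat.factorial T.childrenOf.length) *
        (T.childrenOf.map fun U => (if U.typeOf = s then dp else dm)
          * ogwMass dp dm t U.typeOf U).prod
    else 0


end

/-!
The laws involved are handled as `ℝ≥0∞`-valued mass functions on `ℤ`, whose convolution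
semiring makes generating-function arguments available. By Poisson thinning, `Z_p` is a Skellam
variable `Po(λ₊) - Po(λ₋)` with `λ₊ = d₊ p(1) + d₋ p(-1)` and `λ₋ = d₊ p(-1) + d₋ p(1)`, so `T p`
is the law of `ψ` of a Skellam variable. For skewed `p`, `λ₊ ≥ d₊ - 1` and `λ₋ ≤ d₋ + d₊⁻⁹`, and
a Chernoff bound with tilt `t ≈ √(d₊ / d₋)` gives `P(Z_p ≤ m) ≤ tᵐ e³ d₊⁻¹⁶`; the gap
`d₊ - d₋ ≥ 8 √(d₊ log d₊)` enters as `(√d₊ - √d₋)² ≥ 16 log d₊`. Hence `T` preserves skewness.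
For skewed `p` and `q`, write `Z_p = W + D_p` and `Z_q = W + D_q` with `W` Skellam with the smaller
of the two rates and independent Skellam increments `D_p`, `D_q` of size `O(|p - q|)`. Clamping
separates `W + D` from `W` only when `W` lies in a Chernoff tail, which yields
`|T p - T q| ≤ (|p(1) - q(1)| + |p(-1) - q(-1)|) / 16`. The iterates of this contraction on the
closed set of skewed probability measures converge to its unique fixed point.
-/

noncomputable section

open ENNReal

/-! ### Iterating a contraction in finitely many coordinates -/

section CoordinateContraction

variable {ι : Type*} {S : Set (ι → ℝ)} {T : (ι → ℝ) → ι → ℝ} {s : Finset ι} {K : ℝ}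

lemma sum_abs_sub_map_le
    (hcontr : ∀ p ∈ S, ∀ q ∈ S, ∀ i, |T p i - T q i| ≤ K * ∑ j ∈ s, |p j - q j|)
    {p q : ι → ℝ} (hp : p ∈ S) (hq : q ∈ S) :
    ∑ j ∈ s, |T p j - T q j| ≤ K * s.card * ∑ j ∈ s, |p j - q j| := by
  calc ∑ j ∈ s, |T p j - T q j| ≤ ∑ _j ∈ s, K * ∑ j ∈ s, |p j - q j| :=
        Finset.sum_le_sum fun j _ => hcontr p hp q hq j
    _ = K * s.card * ∑ j ∈ s, |p j - q j| := by rw [Finset.sum_const, nsmul_eq_mul]; ring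

lemma sum_abs_sub_iterate_le (hT : Set.MapsTo T S S) (hK : 0 ≤ K)
    (hcontr : ∀ p ∈ S, ∀ q ∈ S, ∀ i, |T p i - T q i| ≤ K * ∑ j ∈ s, |p j - q j|)
    {x₀ : ι → ℝ} (hx₀ : x₀ ∈ S) (t : ℕ) :
    ∑ j ∈ s, |T^[t + 1] x₀ j - T^[t] x₀ j| ≤ (K * s.card) ^ t * ∑ j ∈ s, |T x₀ j - x₀ j| := by
  induction t with
  | zero => simp
  | succ t ih =>
    have e : ∀ n, T^[n + 1] x₀ = T (T^[n] x₀) := fun n => Function.iterate_succ_apply' T n x₀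
    rw [e t, e (t + 1)]
    calc ∑ j ∈ s, |T (T^[t + 1] x₀) j - T (T^[t] x₀) j|
        ≤ K * s.card * ∑ j ∈ s, |T^[t + 1] x₀ j - T^[t] x₀ j| :=
          sum_abs_sub_map_le hcontr (hT.iterate (t + 1) hx₀) (hT.iterate t hx₀)
      _ ≤ K * s.card * ((K * s.card) ^ t * ∑ j ∈ s, |T x₀ j - x₀ j|) :=
          mul_le_mul_of_nonneg_left ih (by positivity)
      _ = (K * s.card) ^ (t + 1) * ∑ j ∈ s, |T x₀ j - x₀ j| := by ring

lemma cauchySeq_iterate_succ_apply (hT : Set.MapsTo T S S) (hK : 0 ≤ K) (hKs : K * s.card < 1)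
    (hcontr : ∀ p ∈ S, ∀ q ∈ S, ∀ i, |T p i - T q i| ≤ K * ∑ j ∈ s, |p j - q j|)
    {x₀ : ι → ℝ} (hx₀ : x₀ ∈ S) (i : ι) : CauchySeq fun t => T^[t + 1] x₀ i := by
  refine cauchySeq_of_le_geometric (K * s.card) (K * ∑ j ∈ s, |T x₀ j - x₀ j|) hKs fun t => ?_
  have e : ∀ n, T^[n + 1] x₀ = T (T^[n] x₀) := fun n => Function.iterate_succ_apply' T n x₀
  rw [Real.dist_eq, abs_sub_comm, e t, e (t + 1)]
  calc |T (T^[t + 1] x₀) i - T (T^[t] x₀) i| ≤ K * ∑ j ∈ s, |T^[t + 1] x₀ j - T^[t] x₀ j| :=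
        hcontr _ (hT.iterate _ hx₀) _ (hT.iterate _ hx₀) i
    _ ≤ K * ((K * s.card) ^ t * ∑ j ∈ s, |T x₀ j - x₀ j|) :=
        mul_le_mul_of_nonneg_left (sum_abs_sub_iterate_le hT hK hcontr hx₀ t) hK
    _ = (K * ∑ j ∈ s, |T x₀ j - x₀ j|) * (K * s.card) ^ t := by ring

lemma eq_of_coord_contraction_of_fixed (hKs : K * s.card < 1)
    (hcontr : ∀ p ∈ S, ∀ q ∈ S, ∀ i, |T p i - T q i| ≤ K * ∑ j ∈ s, |p j - q j|)
    {p q : ι → ℝ} (hp : p ∈ S) (hq : q ∈ S) (hpfix : T p = p) (hqfix : T q = q) : q = p := by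
  have hzero : ∑ j ∈ s, |q j - p j| = 0 := by
    have h := sum_abs_sub_map_le hcontr hq hp
    rw [hqfix, hpfix] at h
    have : 0 ≤ ∑ j ∈ s, |q j - p j| := Finset.sum_nonneg fun _ _ => abs_nonneg _
    nlinarith
  funext i
  have h := hcontr q hq p hp i
  rw [hqfix, hpfix, hzero, mul_zero] at h
  exact sub_eq_zero.mp (abs_nonpos_iff.mp h)

theorem exists_fixedPoint_tendsto_iterate_of_coord_contraction
    (hS : IsClosed S) (hT : Set.MapsTo T S S) (hK : 0 ≤ K) (hKs : K * s.card < 1)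
    (hcontr : ∀ p ∈ S, ∀ q ∈ S, ∀ i, |T p i - T q i| ≤ K * ∑ j ∈ s, |p j - q j|)
    {x₀ : ι → ℝ} (hx₀ : x₀ ∈ S) :
    ∃ p ∈ S, T p = p ∧ (∀ q ∈ S, T q = q → q = p) ∧
      Tendsto (fun t => T^[t] x₀) atTop (𝓝 p) := by
  have hxS : ∀ t, T^[t] x₀ ∈ S := fun t => hT.iterate t hx₀
  choose p hp using fun i =>
    cauchySeq_tendsto_of_complete (cauchySeq_iterate_succ_apply hT hK hKs hcontr hx₀ i)
  have hlim : Tendsto (fun t => T^[t] x₀) atTop (𝓝 p) :=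
    tendsto_pi_nhds.mpr fun i => (tendsto_add_atTop_iff_nat 1).mp (hp i)
  have hpS : p ∈ S := hS.mem_of_tendsto hlim (Eventually.of_forall hxS)
  have hdist : Tendsto (fun t => K * ∑ j ∈ s, |p j - T^[t] x₀ j|) atTop (𝓝 0) := by
    simpa using (tendsto_finsetSum s fun j _ =>
      ((tendsto_pi_nhds.mp hlim j).const_sub (p j)).abs).const_mul K
  have hfix : T p = p := by
    funext i
    refine tendsto_nhds_unique (tendsto_iff_dist_tendsto_zero.mpr ?_) (hp i)
    refine squeeze_zero (fun _ => dist_nonneg) (fun t => ?_) hdist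
    rw [Real.dist_eq, Function.iterate_succ_apply', abs_sub_comm]
    exact hcontr p hpS _ (hxS t) i
  exact ⟨p, hpS, hfix,
    fun q hq hqfix => eq_of_coord_contraction_of_fixed hKs hcontr hpS hq hfix hqfix, hlim⟩

end CoordinateContraction

namespace SkewedFixedPoint

/-! ### The convolution semiring of mass functions on `ℤ` -/

lemma tsum_int_eq_tsum_nat (f : ℤ → ℝ≥0∞) (h : ∀ w : ℤ, w < 0 → f w = 0) :
    ∑' w : ℤ, f w = ∑' n : ℕ, f n := by
  refine (Function.Injective.tsum_eq (f := f) (fun a b hab => by exact_mod_cast hab) ?_).symm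
  intro x hx
  rcases lt_or_ge x 0 with hlt | hge
  · exact absurd (h x hlt) hx
  · exact ⟨x.toNat, by omega⟩

lemma tsum_tsum_eq_tsum_sum_antidiagonal (F : ℕ → ℕ → ℝ≥0∞) :
    ∑' i, ∑' j, F i j = ∑' k, ∑ p ∈ Finset.HasAntidiagonal.antidiagonal k, F p.1 p.2 := by
  rw [← ENNReal.tsum_prod, ← Finset.HasAntidiagonal.sigmaAntidiagonalEquivProd.tsum_eq,
    ENNReal.tsum_sigma']
  exact tsum_congr fun k => Finset.tsum_subtype _ fun p : ℕ × ℕ => F p.1 p.2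

/-- Mass functions on `ℤ` with values in `ℝ≥0∞`; multiplication is convolution. -/
structure ConvMass where
  toFun : ℤ → ℝ≥0∞

namespace ConvMass

instance : CoeFun ConvMass fun _ => ℤ → ℝ≥0∞ := ⟨toFun⟩

@[ext] lemma ext {F G : ConvMass} (h : ∀ z, F z = G z) : F = G := by
  cases F; cases G; simp only [mk.injEq]; funext z; exact h z

instance : Add ConvMass := ⟨fun F G => ⟨fun z => F z + G z⟩⟩
instance : Zero ConvMass := ⟨⟨fun _ => 0⟩⟩
instance : Mul ConvMass := ⟨fun F G => ⟨fun z => ∑' w : ℤ, F w * G (z - w)⟩⟩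
instance : One ConvMass := ⟨⟨fun z => if z = 0 then 1 else 0⟩⟩

@[simp] lemma add_apply (F G : ConvMass) (z : ℤ) : (F + G) z = F z + G z := rfl
@[simp] lemma zero_apply (z : ℤ) : (0 : ConvMass) z = 0 := rfl
lemma mul_apply (F G : ConvMass) (z : ℤ) : (F * G) z = ∑' w : ℤ, F w * G (z - w) := rfl
lemma one_apply (z : ℤ) : (1 : ConvMass) z = if z = 0 then 1 else 0 := rfl

lemma mul_apply_eq_tsum_shift (F G H : ConvMass) (z : ℤ) :
    ∑' w : ℤ, (F * G) w * H (z - w) = ∑' (u : ℤ) (v : ℤ), F u * G v * H (z - u - v) :=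
  calc ∑' w : ℤ, (F * G) w * H (z - w)
      = ∑' (w : ℤ) (u : ℤ), F u * G (w - u) * H (z - w) :=
        tsum_congr fun w => by rw [mul_apply, ENNReal.tsum_mul_right]
    _ = ∑' (u : ℤ) (w : ℤ), F u * G (w - u) * H (z - w) := ENNReal.tsum_comm
    _ = ∑' (u : ℤ) (v : ℤ), F u * G v * H (z - u - v) := by
        refine tsum_congr fun u => ?_
        rw [← (Equiv.addLeft u).tsum_eq]
        refine tsum_congr fun v => ?_
        simp only [Equiv.coe_addLeft, add_sub_cancel_left, sub_add_eq_sub_sub]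

instance : CommSemiring ConvMass where
  add_assoc F G H := by ext z; exact add_assoc _ _ _
  zero_add F := by ext z; exact zero_add _
  add_zero F := by ext z; exact add_zero _
  add_comm F G := by ext z; exact add_comm _ _
  nsmul := nsmulRec
  mul_assoc F G H := by
    ext z
    rw [mul_apply, mul_apply, mul_apply_eq_tsum_shift]
    refine tsum_congr fun u => ?_
    rw [mul_apply, ← ENNReal.tsum_mul_left]
    exact tsum_congr fun v => by rw [mul_assoc, sub_sub]
  mul_comm F G := by
    ext z
    rw [mul_apply, mul_apply, ← (Equiv.subLeft z).tsum_eq]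
    exact tsum_congr fun w => by simp only [Equiv.subLeft_apply, _root_.sub_sub_cancel, mul_comm]
  one_mul F := by
    ext z
    rw [mul_apply, tsum_eq_single 0 fun w hw => by simp [one_apply, hw]]
    simp [one_apply]
  mul_one F := by
    ext z
    rw [mul_apply, tsum_eq_single z fun w hw => by simp [one_apply, sub_eq_zero, Ne.symm hw]]
    simp [one_apply]
  left_distrib F G H := by
    ext z
    rw [mul_apply, add_apply, mul_apply, mul_apply, ← ENNReal.tsum_add]
    exact tsum_congr fun w => by rw [add_apply, mul_add]
  right_distrib F G H := by
    ext z
    rw [mul_apply, add_apply, mul_apply, mul_apply, ← ENNReal.tsum_add]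
    exact tsum_congr fun w => by rw [add_apply, add_mul]
  zero_mul F := by ext z; simp [mul_apply]
  mul_zero F := by ext z; simp [mul_apply]

def evalAddHom (z : ℤ) : ConvMass →+ ℝ≥0∞ where
  toFun F := F z
  map_zero' := rfl
  map_add' _ _ := rfl

lemma sum_apply {ι : Type*} (s : Finset ι) (g : ι → ConvMass) (z : ℤ) :
    (∑ i ∈ s, g i) z = ∑ i ∈ s, g i z := map_sum (evalAddHom z) g s

lemma nsmul_apply (n : ℕ) (F : ConvMass) (z : ℤ) : (n • F) z = n * F z :=
  (map_nsmul (evalAddHom z) n F).trans (nsmul_eq_mul _ _)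

lemma mul_apply_of_support_subset {F Q : ConvMass}
    (hQ : ∀ w : ℤ, w ∉ ({-1, 0, 1} : Set ℤ) → Q w = 0) (z : ℤ) :
    (F * Q) z = F (z - 1) * Q 1 + F z * Q 0 + F (z + 1) * Q (-1) := by
  rw [mul_apply, tsum_eq_sum (s := {z - 1, z, z + 1}) fun w hw => by
    simp only [Finset.mem_insert, Finset.mem_singleton] at hw
    rw [hQ (z - w) (by simp only [Set.mem_insert_iff, Set.mem_singleton_iff]; omega), mul_zero]]
  rw [Finset.sum_insert (by simp only [Finset.mem_insert, Finset.mem_singleton]; omega),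
    Finset.sum_insert (by simp only [Finset.mem_singleton]; omega), Finset.sum_singleton,
    _root_.sub_sub_cancel, sub_self, show z - (z + 1) = -1 by ring, add_assoc]

def single (x : ℤ) (r : ℝ≥0∞) : ConvMass := ⟨fun z => if z = x then r else 0⟩

@[simp] lemma single_apply (x : ℤ) (r : ℝ≥0∞) (z : ℤ) :
    single x r z = if z = x then r else 0 := rfl

lemma single_mul_apply (x : ℤ) (r : ℝ≥0∞) (F : ConvMass) (z : ℤ) :
    (single x r * F) z = r * F (z - x) := by
  rw [mul_apply, tsum_eq_single x fun w hw => by simp [hw]]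
  simp

lemma single_pow (x : ℤ) (r : ℝ≥0∞) (k : ℕ) : single x r ^ k = single (k * x) (r ^ k) := by
  induction k with
  | zero => ext z; simp [one_apply]
  | succ n ih =>
    ext z
    rw [pow_succ, ih, mul_comm, single_mul_apply]
    simp only [single_apply]
    by_cases h : z - x = n * x
    · rw [if_pos h, if_pos (by push_cast; linear_combination h), pow_succ, mul_comm]
    · rw [if_neg h, if_neg (by push_cast; contrapose! h; linear_combination h), mul_zero]

end ConvMass

lemma div_factorial_add_mul_choose (a : ℝ) (i j : ℕ) :
    a / (i + j).factorial * (i + j).choose i = a / (i.factorial * j.factorial) := by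
  have key : ((i + j).choose i : ℝ) * i.factorial * j.factorial = (i + j).factorial := by
    rw [Nat.choose_symm_add]; exact_mod_cast Nat.add_choose_mul_factorial_mul_factorial i j
  have hc : ((i + j).choose i : ℝ) ≠ 0 := by exact_mod_cast (Nat.choose_pos (by omega)).ne'
  rw [← key]
  field_simp

lemma add_pow_div_factorial (s s' : ℝ) (n : ℕ) :
    (s + s') ^ n / n.factorial = ∑ p ∈ Finset.HasAntidiagonal.antidiagonal n,
      s ^ p.1 / p.1.factorial * (s' ^ p.2 / p.2.factorial) := by
  rw [(Commute.all s s').add_pow', Finset.sum_div]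
  refine Finset.sum_congr rfl fun p hp => ?_
  obtain rfl := Finset.HasAntidiagonal.mem_antidiagonal.mp hp
  rw [nsmul_eq_mul, mul_comm, mul_div_right_comm, div_factorial_add_mul_choose]
  ring

def expCoeff (u : ℝ) (k : ℕ) : ℝ≥0∞ := ENNReal.ofReal (u ^ k / k.factorial)

lemma tsum_expCoeff {x : ℝ} (hx : 0 ≤ x) : ∑' n, expCoeff x n = ENNReal.ofReal (Real.exp x) := by
  rw [Real.exp_eq_exp_ℝ, NormedSpace.exp_eq_tsum_div, ENNReal.ofReal_tsum_of_nonneg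
    (fun n => by positivity) (Real.summable_pow_div_factorial x)]
  rfl

lemma expCoeff_add_mul_choose {u : ℝ} (hu : 0 ≤ u) (i j : ℕ) :
    expCoeff u (i + j) * (i + j).choose i = expCoeff u i * expCoeff u j := by
  rw [expCoeff, expCoeff, expCoeff, ← ENNReal.ofReal_natCast, ← ENNReal.ofReal_mul (by positivity),
    ← ENNReal.ofReal_mul (by positivity), div_factorial_add_mul_choose, pow_add]
  congr 1
  ring

lemma sum_antidiagonal_expCoeff {s s' : ℝ} (hs : 0 ≤ s) (hs' : 0 ≤ s') (n : ℕ) :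
    ∑ p ∈ Finset.HasAntidiagonal.antidiagonal n, expCoeff s p.1 * expCoeff s' p.2
      = expCoeff (s + s') n := by
  rw [expCoeff, add_pow_div_factorial, ENNReal.ofReal_sum_of_nonneg fun p _ => by positivity]
  exact Finset.sum_congr rfl fun p _ => (ENNReal.ofReal_mul (by positivity)).symm

lemma expCoeff_mul_ofReal_pow {u r : ℝ} (hu : 0 ≤ u) (hr : 0 ≤ r) (k : ℕ) :
    expCoeff u k * ENNReal.ofReal r ^ k = expCoeff (u * r) k := by
  rw [expCoeff, expCoeff, ← ENNReal.ofReal_pow hr, ← ENNReal.ofReal_mul (by positivity)]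
  congr 1
  ring

namespace ConvMass

def expSMul (u : ℝ) (F : ConvMass) : ConvMass := ⟨fun z => ∑' k, expCoeff u k * (F ^ k) z⟩

lemma expSMul_apply (u : ℝ) (F : ConvMass) (z : ℤ) :
    expSMul u F z = ∑' k, expCoeff u k * (F ^ k) z := rfl

lemma expSMul_mul_expSMul_apply (u v : ℝ) (F G : ConvMass) (z : ℤ) :
    (expSMul u F * expSMul v G) z
      = ∑' (i : ℕ) (j : ℕ), expCoeff u i * expCoeff v j * (F ^ i * G ^ j) z :=
  calc ∑' w : ℤ, (expSMul u F) w * (expSMul v G) (z - w)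
      = ∑' (w : ℤ) (i : ℕ) (j : ℕ), expCoeff u i * (F ^ i) w * (expCoeff v j * (G ^ j) (z - w)) :=
        tsum_congr fun w => by
          rw [expSMul_apply, expSMul_apply, ← ENNReal.tsum_mul_right]
          exact tsum_congr fun i => ENNReal.tsum_mul_left.symm
    _ = ∑' (i : ℕ) (j : ℕ) (w : ℤ),
          expCoeff u i * (F ^ i) w * (expCoeff v j * (G ^ j) (z - w)) := by
        rw [ENNReal.tsum_comm]
        exact tsum_congr fun i => ENNReal.tsum_comm
    _ = _ := by
        refine tsum_congr fun i => tsum_congr fun j => ?_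
        rw [mul_apply, ← ENNReal.tsum_mul_left]
        exact tsum_congr fun w => by ring

lemma expSMul_add {u : ℝ} (hu : 0 ≤ u) (F G : ConvMass) :
    expSMul u (F + G) = expSMul u F * expSMul u G := by
  ext z
  rw [expSMul_mul_expSMul_apply, tsum_tsum_eq_tsum_sum_antidiagonal]
  refine tsum_congr fun k => ?_
  rw [(Commute.all F G).add_pow' k, sum_apply, Finset.mul_sum]
  refine Finset.sum_congr rfl fun p hp => ?_
  obtain rfl := Finset.HasAntidiagonal.mem_antidiagonal.mp hp
  rw [nsmul_apply, ← mul_assoc, expCoeff_add_mul_choose hu]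

def poisUp (s : ℝ) : ConvMass := expSMul s (single 1 1)

def poisDown (s : ℝ) : ConvMass := expSMul s (single (-1) 1)

lemma expSMul_single_apply {u r : ℝ} (hu : 0 ≤ u) (hr : 0 ≤ r) (x : ℤ) (z : ℤ) :
    expSMul u (single x (ENNReal.ofReal r)) z
      = ∑' k : ℕ, if z = k * x then expCoeff (u * r) k else 0 := by
  rw [expSMul_apply]
  refine tsum_congr fun k => ?_
  rw [single_pow, single_apply, mul_ite, mul_zero, expCoeff_mul_ofReal_pow hu hr]

lemma expSMul_single_ofReal {u r : ℝ} (hu : 0 ≤ u) (hr : 0 ≤ r) (x : ℤ) :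
    expSMul u (single x (ENNReal.ofReal r)) = expSMul (u * r) (single x 1) := by
  ext z
  rw [expSMul_single_apply hu hr, ← ENNReal.ofReal_one,
    expSMul_single_apply (mul_nonneg hu hr) zero_le_one, mul_one]

lemma poisUp_apply_of_neg {s : ℝ} (hs : 0 ≤ s) {z : ℤ} (hz : z < 0) : poisUp s z = 0 := by
  rw [poisUp, ← ENNReal.ofReal_one, expSMul_single_apply hs zero_le_one]
  exact ENNReal.tsum_eq_zero.mpr fun k => if_neg (by omega)

lemma poisUp_apply_natCast {s : ℝ} (hs : 0 ≤ s) (n : ℕ) : poisUp s n = expCoeff s n := by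
  rw [poisUp, ← ENNReal.ofReal_one, expSMul_single_apply hs zero_le_one, mul_one,
    tsum_eq_single n fun k hk => if_neg (by omega), if_pos (by ring)]

lemma poisDown_apply {s : ℝ} (hs : 0 ≤ s) (z : ℤ) : poisDown s z = poisUp s (-z) := by
  rw [poisDown, poisUp, ← ENNReal.ofReal_one, expSMul_single_apply hs zero_le_one,
    expSMul_single_apply hs zero_le_one]
  exact tsum_congr fun k => by simp only [mul_neg, mul_one, neg_eq_iff_eq_neg]

lemma expSMul_single_zero {u r : ℝ} (hu : 0 ≤ u) (hr : 0 ≤ r) :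
    expSMul u (single 0 (ENNReal.ofReal r)) = single 0 (ENNReal.ofReal (Real.exp (u * r))) := by
  ext z
  rw [expSMul_single_apply hu hr 0, single_apply]
  simp only [mul_zero]
  split_ifs with hz
  · exact tsum_expCoeff (by positivity)
  · exact ENNReal.tsum_eq_zero.mpr fun _ => rfl

lemma expSMul_mul_expSMul {s s' : ℝ} (hs : 0 ≤ s) (hs' : 0 ≤ s') (F : ConvMass) :
    expSMul s F * expSMul s' F = expSMul (s + s') F := by
  ext z
  rw [expSMul_mul_expSMul_apply, tsum_tsum_eq_tsum_sum_antidiagonal, expSMul_apply]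
  refine tsum_congr fun k => ?_
  rw [← sum_antidiagonal_expCoeff hs hs', Finset.sum_mul]
  refine Finset.sum_congr rfl fun p hp => ?_
  rw [← pow_add, Finset.HasAntidiagonal.mem_antidiagonal.mp hp]

lemma poisUp_mul_poisUp {s s' : ℝ} (hs : 0 ≤ s) (hs' : 0 ≤ s') :
    poisUp s * poisUp s' = poisUp (s + s') :=
  expSMul_mul_expSMul hs hs' _

lemma poisDown_mul_poisDown {s s' : ℝ} (hs : 0 ≤ s) (hs' : 0 ≤ s') :
    poisDown s * poisDown s' = poisDown (s + s') :=
  expSMul_mul_expSMul hs hs' _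

end ConvMass

/-! ### Poisson and Skellam distributions -/

def poisMass (d : ℝ) (k : ℕ) : ℝ≥0∞ := ENNReal.ofReal (poisP d k)

lemma poisMass_eq (d : ℝ) (k : ℕ) :
    poisMass d k = ENNReal.ofReal (Real.exp (-d)) * expCoeff d k := by
  rw [poisMass, expCoeff, ← ENNReal.ofReal_mul (Real.exp_pos _).le, poisP, mul_div_assoc]

section Poisson

variable {d : ℝ}

lemma tsum_poisMass (hd : 0 ≤ d) : ∑' k, poisMass d k = 1 := by
  simp only [poisMass_eq d]
  rw [ENNReal.tsum_mul_left, tsum_expCoeff hd, ← ENNReal.ofReal_mul (Real.exp_pos _).le,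
    ← Real.exp_add, neg_add_cancel, Real.exp_zero, ENNReal.ofReal_one]

lemma tsum_poisMass_mul_pow {s : ℝ} (hd : 0 ≤ d) (hs : 0 ≤ s) :
    ∑' k, poisMass d k * ENNReal.ofReal (s ^ k) = ENNReal.ofReal (Real.exp (d * s - d)) := by
  simp only [poisMass_eq d, mul_assoc, ENNReal.ofReal_pow hs, expCoeff_mul_ofReal_pow hd hs]
  rw [ENNReal.tsum_mul_left, tsum_expCoeff (by positivity), ← ENNReal.ofReal_mul (by positivity),
    ← Real.exp_add, neg_add_eq_sub]

lemma poisMass_succ_le (hd : 0 ≤ d) (j : ℕ) :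
    poisMass d (j + 1) ≤ ENNReal.ofReal d * poisMass d j := by
  rw [poisMass, poisMass, ← ENNReal.ofReal_mul hd]
  refine ENNReal.ofReal_le_ofReal ?_
  rw [poisP, poisP, Nat.factorial_succ, Nat.cast_mul, pow_succ]
  have hj : (0 : ℝ) < j.factorial := by positivity
  rw [div_le_iff₀ (by positivity)]
  calc Real.exp (-d) * (d ^ j * d) = d * (Real.exp (-d) * d ^ j / j.factorial) * j.factorial := by
        field_simp
    _ ≤ d * (Real.exp (-d) * d ^ j / j.factorial) * ((j + 1 : ℕ) * j.factorial) := by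
        gcongr
        exact le_mul_of_one_le_left hj.le (by exact_mod_cast Nat.le_add_left 1 j)

lemma tsum_poisMass_succ_le (hd : 0 ≤ d) : ∑' j, poisMass d (j + 1) ≤ ENNReal.ofReal d :=
  calc ∑' j, poisMass d (j + 1) ≤ ∑' j, ENNReal.ofReal d * poisMass d j :=
        ENNReal.tsum_le_tsum fun j => poisMass_succ_le hd j
    _ = ENNReal.ofReal d := by rw [ENNReal.tsum_mul_left, tsum_poisMass hd, mul_one]

lemma tsum_poisMass_succ_mul_pow_le {s : ℝ} (hd : 0 ≤ d) (hs : 0 ≤ s) :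
    ∑' j, poisMass d (j + 1) * ENNReal.ofReal (s ^ (j + 1))
      ≤ ENNReal.ofReal (d * s * Real.exp (d * s)) :=
  calc ∑' j, poisMass d (j + 1) * ENNReal.ofReal (s ^ (j + 1))
      ≤ ∑' j, ENNReal.ofReal (d * s) * (poisMass d j * ENNReal.ofReal (s ^ j)) := by
        refine ENNReal.tsum_le_tsum fun j => ?_
        rw [pow_succ, ENNReal.ofReal_mul (by positivity), ENNReal.ofReal_mul hd]
        calc poisMass d (j + 1) * (ENNReal.ofReal (s ^ j) * ENNReal.ofReal s)
            ≤ ENNReal.ofReal d * poisMass d j * (ENNReal.ofReal (s ^ j) * ENNReal.ofReal s) :=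
              mul_le_mul_left (poisMass_succ_le hd j) _
          _ = _ := by ring
    _ = ENNReal.ofReal (d * s) * ENNReal.ofReal (Real.exp (d * s - d)) := by
        rw [ENNReal.tsum_mul_left, tsum_poisMass_mul_pow hd hs]
    _ ≤ ENNReal.ofReal (d * s * Real.exp (d * s)) := by
        rw [← ENNReal.ofReal_mul (by positivity)]
        gcongr
        linarith

end Poisson

/-- The Skellam distribution: the law of `X - Y` for independent `X ~ Po(u)` and `Y ~ Po(v)`. -/
def skellam (u v : ℝ) (z : ℤ) : ℝ≥0∞ :=
  ENNReal.ofReal (Real.exp (-(u + v))) * (ConvMass.poisUp u * ConvMass.poisDown v) z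

section Skellam

variable {u v : ℝ}

lemma skellam_eq_tsum (hu : 0 ≤ u) (hv : 0 ≤ v) (z : ℤ) :
    skellam u v z = ∑' (x : ℕ) (y : ℕ),
      if (x : ℤ) - y = z then poisMass u x * poisMass v y else 0 := by
  rw [skellam, ConvMass.mul_apply, tsum_int_eq_tsum_nat _ fun w hw => by
    rw [ConvMass.poisUp_apply_of_neg hu hw, zero_mul], ← ENNReal.tsum_mul_left]
  refine tsum_congr fun x => ?_
  rw [ConvMass.poisDown_apply hv]
  rcases lt_or_ge ((x : ℤ) - z) 0 with hxz | hxz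
  · rw [ENNReal.tsum_eq_zero.mpr fun y => if_neg (by omega),
      ConvMass.poisUp_apply_of_neg hv (by omega), mul_zero, mul_zero]
  · rw [tsum_eq_single ((x : ℤ) - z).toNat fun y hy => if_neg (by omega), if_pos (by omega),
      show -(z - x) = (((x : ℤ) - z).toNat : ℤ) by omega, ConvMass.poisUp_apply_natCast hu,
      ConvMass.poisUp_apply_natCast hv, poisMass_eq, poisMass_eq, neg_add,
      Real.exp_add, ENNReal.ofReal_mul (Real.exp_pos _).le]
    ring

lemma tsum_skellam_mul (hu : 0 ≤ u) (hv : 0 ≤ v) (g : ℤ → ℝ≥0∞) :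
    ∑' z, skellam u v z * g z = ∑' (x : ℕ) (y : ℕ), poisMass u x * poisMass v y * g (x - y) :=
  calc ∑' z, skellam u v z * g z
      = ∑' (z : ℤ) (x : ℕ) (y : ℕ), if (x : ℤ) - y = z then poisMass u x * poisMass v y * g z
          else 0 := by
        refine tsum_congr fun z => ?_
        rw [skellam_eq_tsum hu hv, ← ENNReal.tsum_mul_right]
        refine tsum_congr fun x => ?_
        rw [← ENNReal.tsum_mul_right]
        exact tsum_congr fun y => by rw [ite_zero_mul]
    _ = ∑' (x : ℕ) (y : ℕ) (z : ℤ), if (x : ℤ) - y = z then poisMass u x * poisMass v y * g z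
          else 0 := by
        rw [ENNReal.tsum_comm]
        exact tsum_congr fun x => ENNReal.tsum_comm
    _ = _ := tsum_congr fun x => tsum_congr fun y => by
        rw [tsum_eq_single ((x : ℤ) - y) fun z hz => if_neg (Ne.symm hz), if_pos rfl]

lemma tsum_ite_skellam (hu : 0 ≤ u) (hv : 0 ≤ v) (A : ℤ → Prop) [DecidablePred A] :
    ∑' z, (if A z then skellam u v z else 0)
      = ∑' (x : ℕ) (y : ℕ), if A (x - y) then poisMass u x * poisMass v y else 0 := by
  simpa only [mul_ite, mul_one, mul_zero] using
    tsum_skellam_mul hu hv fun z => if A z then 1 else 0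

lemma tsum_skellam (hu : 0 ≤ u) (hv : 0 ≤ v) : ∑' z, skellam u v z = 1 := by
  simpa only [mul_one, ENNReal.tsum_mul_left, tsum_poisMass hv, tsum_poisMass hu] using
    tsum_skellam_mul hu hv fun _ => 1

lemma tsum_ite_skellam_le_one (hu : 0 ≤ u) (hv : 0 ≤ v) (A : ℤ → Prop) [DecidablePred A] :
    ∑' z, (if A z then skellam u v z else 0) ≤ 1 :=
  (ENNReal.tsum_le_tsum fun z => by split_ifs <;> simp).trans (tsum_skellam hu hv).le

lemma skellam_le_one (hu : 0 ≤ u) (hv : 0 ≤ v) (z : ℤ) : skellam u v z ≤ 1 :=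
  (ENNReal.le_tsum z).trans (tsum_skellam hu hv).le

lemma skellam_add {u' v' : ℝ} (hu : 0 ≤ u) (hv : 0 ≤ v) (hu' : 0 ≤ u') (hv' : 0 ≤ v') (z : ℤ) :
    skellam (u + u') (v + v') z = ∑' d : ℤ, skellam u' v' d * skellam u v (z - d) := by
  have hmul : ConvMass.poisUp (u + u') * ConvMass.poisDown (v + v')
      = ConvMass.poisUp u' * ConvMass.poisDown v' * (ConvMass.poisUp u * ConvMass.poisDown v) := by
    rw [← ConvMass.poisUp_mul_poisUp hu hu', ← ConvMass.poisDown_mul_poisDown hv hv']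
    ring
  simp only [skellam]
  rw [hmul, ConvMass.mul_apply, ← ENNReal.tsum_mul_left]
  refine tsum_congr fun d => ?_
  rw [show -(u + u' + (v + v')) = -(u' + v') + -(u + v) by ring, Real.exp_add,
    ENNReal.ofReal_mul (Real.exp_pos _).le]
  ring

lemma tsum_ite_skellam_le_le_chernoff {t : ℝ} (hu : 0 ≤ u) (hv : 0 ≤ v) (ht : 1 ≤ t) (m : ℤ) :
    ∑' z, (if z ≤ m then skellam u v z else 0)
      ≤ ENNReal.ofReal (t ^ m * Real.exp (u / t - u + (v * t - v))) := by
  have ht0 : 0 < t := by linarith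
  rw [tsum_ite_skellam hu hv]
  calc ∑' (x : ℕ) (y : ℕ), (if (x : ℤ) - y ≤ m then poisMass u x * poisMass v y else 0)
      ≤ ∑' (x : ℕ) (y : ℕ), ENNReal.ofReal (t ^ m) *
          (poisMass u x * ENNReal.ofReal ((1 / t) ^ x) *
            (poisMass v y * ENNReal.ofReal (t ^ y))) := by
        refine ENNReal.tsum_le_tsum fun x => ENNReal.tsum_le_tsum fun y => ?_
        split_ifs with hxy
        · -- Markov's inequality for `t ^ (Y - X)`
          have hpow : 1 ≤ t ^ m * ((1 / t) ^ x * t ^ y) := by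
            rw [one_div, inv_pow, ← zpow_natCast t x, ← zpow_natCast t y, ← zpow_neg,
              ← zpow_add₀ ht0.ne', ← zpow_add₀ ht0.ne']
            exact one_le_zpow₀ ht (by omega)
          calc poisMass u x * poisMass v y
              ≤ poisMass u x * poisMass v y * ENNReal.ofReal (t ^ m * ((1 / t) ^ x * t ^ y)) :=
                le_mul_of_one_le_right' (by simpa using ENNReal.ofReal_le_ofReal hpow)
            _ = _ := by
                rw [ENNReal.ofReal_mul (by positivity), ENNReal.ofReal_mul (by positivity)]
                ring
        · exact zero_le
    _ = ENNReal.ofReal (t ^ m) * ((∑' x : ℕ, poisMass u x * ENNReal.ofReal ((1 / t) ^ x)) *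
          ∑' y : ℕ, poisMass v y * ENNReal.ofReal (t ^ y)) := by
        rw [← ENNReal.tsum_mul_right, ← ENNReal.tsum_mul_left]
        refine tsum_congr fun x => ?_
        rw [← ENNReal.tsum_mul_left, ← ENNReal.tsum_mul_left]
    _ = ENNReal.ofReal (t ^ m * Real.exp (u / t - u + (v * t - v))) := by
        rw [tsum_poisMass_mul_pow hu (by positivity), tsum_poisMass_mul_pow hv ht0.le,
          ← ENNReal.ofReal_mul (by positivity), ← ENNReal.ofReal_mul (by positivity),
          ← Real.exp_add, mul_one_div]

lemma tsum_ite_one_le_skellam_le (hu : 0 ≤ u) (hv : 0 ≤ v) :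
    ∑' z, (if 1 ≤ z then skellam u v z else 0) ≤ ENNReal.ofReal u :=
  calc ∑' z, (if 1 ≤ z then skellam u v z else 0)
      ≤ ∑' (x : ℕ) (y : ℕ), (if 1 ≤ x then poisMass u x else 0) * poisMass v y := by
        rw [tsum_ite_skellam hu hv]
        refine ENNReal.tsum_le_tsum fun x => ENNReal.tsum_le_tsum fun y => ?_
        rw [ite_zero_mul]
        split_ifs <;> first | exact le_rfl | exact zero_le | omega
    _ = ∑' j : ℕ, poisMass u (j + 1) := by
        simp only [ENNReal.tsum_mul_left, tsum_poisMass hv, mul_one]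
        rw [tsum_eq_zero_add' ENNReal.summable, if_neg (by omega), zero_add]
        exact tsum_congr fun j => if_pos (by omega)
    _ ≤ ENNReal.ofReal u := tsum_poisMass_succ_le hu

lemma tsum_skellam_mul_ite_le_neg_one_le {t : ℝ} (hu : 0 ≤ u) (hv : 0 ≤ v) (ht : 1 ≤ t) :
    ∑' z, skellam u v z * (if z ≤ -1 then ENNReal.ofReal (t ^ (-z)) else 0)
      ≤ ENNReal.ofReal (v * t * Real.exp (v * t)) :=
  calc ∑' z, skellam u v z * (if z ≤ -1 then ENNReal.ofReal (t ^ (-z)) else 0)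
      ≤ ∑' (x : ℕ) (y : ℕ), poisMass u x *
          (if 1 ≤ y then poisMass v y * ENNReal.ofReal (t ^ y) else 0) := by
        rw [tsum_skellam_mul hu hv]
        refine ENNReal.tsum_le_tsum fun x => ENNReal.tsum_le_tsum fun y => ?_
        split_ifs with hxy hy
        · rw [mul_assoc]
          gcongr
          rw [← zpow_natCast]
          exact zpow_le_zpow_right₀ ht (by omega)
        · omega
        · simp
        · simp
    _ = ∑' j : ℕ, poisMass v (j + 1) * ENNReal.ofReal (t ^ (j + 1)) := by
        simp only [ENNReal.tsum_mul_right, ENNReal.tsum_mul_left, tsum_poisMass hu, one_mul]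
        rw [tsum_eq_zero_add' ENNReal.summable, if_neg (by omega), zero_add]
        exact tsum_congr fun j => if_pos (by omega)
    _ ≤ ENNReal.ofReal (v * t * Real.exp (v * t)) :=
        tsum_poisMass_succ_mul_pow_le hv (by linarith)

end Skellam

/-! ### The operator `T` as a clamped Skellam variable -/

lemma isProbOn3_flipM {p : ℤ → ℝ} (hp : IsProbOn3 p) : IsProbOn3 (flipM p) := by
  obtain ⟨h0, hsupp, hsum⟩ := hp
  refine ⟨fun z => h0 _, fun z hz => hsupp (-z) ?_, by unfold flipM; norm_num; linarith⟩
  simp only [Set.mem_insert_iff, Set.mem_singleton_iff] at hz ⊢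
  omega

namespace ConvMass

def ofReal (p : ℤ → ℝ) : ConvMass := ⟨fun z => ENNReal.ofReal (p z)⟩

lemma single_mul_single (x y : ℤ) (a b : ℝ≥0∞) :
    single x a * single y b = single (x + y) (a * b) := by
  ext z
  rw [single_mul_apply]
  simp only [single_apply, sub_eq_iff_eq_add, add_comm y, mul_ite, mul_zero]

lemma ofReal_eq_sum_single {p : ℤ → ℝ} (hp : IsProbOn3 p) :
    ofReal p = single 1 (ENNReal.ofReal (p 1)) +
      (single 0 (ENNReal.ofReal (p 0)) + single (-1) (ENNReal.ofReal (p (-1)))) := by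
  ext z
  simp only [add_apply, single_apply]
  by_cases h1 : z = 1
  · subst h1; simp [ofReal]
  by_cases h0 : z = 0
  · subst h0; simp [ofReal]
  by_cases hm : z = -1
  · subst hm; simp [ofReal]
  simp [ofReal, h1, h0, hm, hp.2.1 z (by simp [h1, h0, hm])]

lemma expSMul_ofReal {p : ℤ → ℝ} (hp : IsProbOn3 p) {d : ℝ} (hd : 0 ≤ d) :
    expSMul d (ofReal p) = single 0 (ENNReal.ofReal (Real.exp (d * p 0)))
      * (poisUp (d * p 1) * poisDown (d * p (-1))) := by
  rw [ofReal_eq_sum_single hp, expSMul_add hd, expSMul_add hd, expSMul_single_ofReal hd (hp.1 1),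
    expSMul_single_zero hd (hp.1 0), expSMul_single_ofReal hd (hp.1 (-1)), poisUp, poisDown]
  ring

end ConvMass

/-- The intensity of the `+1` summands of `Z_p`: those with `η = 1` among the first `γ₊` and
those with `η = -1` among the last `γ₋`. -/
def upRate (dp dm : ℝ) (p : ℤ → ℝ) : ℝ := dp * p 1 + dm * p (-1)

def downRate (dp dm : ℝ) (p : ℤ → ℝ) : ℝ := dp * p (-1) + dm * p 1

section Rates

variable {dp dm : ℝ}

lemma upRate_nonneg {p : ℤ → ℝ} (hp : IsProbOn3 p) (hdp : 0 ≤ dp) (hdm : 0 ≤ dm) :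
    0 ≤ upRate dp dm p :=
  add_nonneg (mul_nonneg hdp (hp.1 1)) (mul_nonneg hdm (hp.1 (-1)))

lemma downRate_nonneg {p : ℤ → ℝ} (hp : IsProbOn3 p) (hdp : 0 ≤ dp) (hdm : 0 ≤ dm) :
    0 ≤ downRate dp dm p :=
  add_nonneg (mul_nonneg hdp (hp.1 (-1))) (mul_nonneg hdm (hp.1 1))

lemma abs_upRate_sub_le (hdm : 0 ≤ dm) (hmd : dm ≤ dp) (p q : ℤ → ℝ) :
    |upRate dp dm p - upRate dp dm q| ≤ dp * (|p 1 - q 1| + |p (-1) - q (-1)|) := by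
  rw [show upRate dp dm p - upRate dp dm q = dp * (p 1 - q 1) + dm * (p (-1) - q (-1)) by
    simp only [upRate]; ring]
  refine (abs_add_le _ _).trans ?_
  rw [abs_mul, abs_mul, abs_of_nonneg (hdm.trans hmd), abs_of_nonneg hdm]
  nlinarith [abs_nonneg (p (-1) - q (-1))]

lemma abs_downRate_sub_le (hdm : 0 ≤ dm) (hmd : dm ≤ dp) (p q : ℤ → ℝ) :
    |downRate dp dm p - downRate dp dm q| ≤ dp * (|p 1 - q 1| + |p (-1) - q (-1)|) := by
  rw [show downRate dp dm p - downRate dp dm q = dp * (p (-1) - q (-1)) + dm * (p 1 - q 1) by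
    simp only [downRate]; ring]
  refine (abs_add_le _ _).trans ?_
  rw [abs_mul, abs_mul, abs_of_nonneg (hdm.trans hmd), abs_of_nonneg hdm]
  nlinarith [abs_nonneg (p 1 - q 1)]

end Rates

open ConvMass in
/-- Poisson thinning: `Z_p` is Skellam distributed with rates `upRate` and `downRate`. -/
theorem tsum_poisMass_mul_ofReal_pow_eq_skellam {p : ℤ → ℝ} (hp : IsProbOn3 p) {dp dm : ℝ}
    (hdp : 0 ≤ dp) (hdm : 0 ≤ dm) (z : ℤ) :
    ∑' (k : ℕ) (l : ℕ), poisMass dp k * poisMass dm l *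
        (ofReal p ^ k * ofReal (flipM p) ^ l) z
      = skellam (upRate dp dm p) (downRate dp dm p) z := by
  have hprod : expSMul dp (ofReal p) * expSMul dm (ofReal (flipM p))
      = single 0 (ENNReal.ofReal (Real.exp ((dp + dm) * p 0)))
        * (poisUp (upRate dp dm p) * poisDown (downRate dp dm p)) := by
    rw [expSMul_ofReal hp hdp, expSMul_ofReal (isProbOn3_flipM hp) hdm, upRate, downRate,
      ← poisUp_mul_poisUp (mul_nonneg hdp (hp.1 1)) (mul_nonneg hdm (hp.1 (-1))),
      ← poisDown_mul_poisDown (mul_nonneg hdp (hp.1 (-1))) (mul_nonneg hdm (hp.1 1))]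
    simp only [flipM, neg_neg, neg_zero]
    have hsingle (a b : ℝ≥0∞) : single 0 a * single 0 b = single 0 (a * b) := by
      simpa using single_mul_single 0 0 a b
    rw [add_mul, Real.exp_add, ENNReal.ofReal_mul (Real.exp_pos _).le, ← hsingle]
    ring
  calc ∑' (k : ℕ) (l : ℕ), poisMass dp k * poisMass dm l * (ofReal p ^ k * ofReal (flipM p) ^ l) z
      = ENNReal.ofReal (Real.exp (-dp)) * ENNReal.ofReal (Real.exp (-dm)) *
          (expSMul dp (ofReal p) * expSMul dm (ofReal (flipM p))) z := by
        rw [expSMul_mul_expSMul_apply, ← ENNReal.tsum_mul_left]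
        refine tsum_congr fun k => ?_
        rw [← ENNReal.tsum_mul_left]
        exact tsum_congr fun l => by rw [poisMass_eq, poisMass_eq]; ring
    _ = skellam (upRate dp dm p) (downRate dp dm p) z := by
        rw [hprod, single_mul_apply, sub_zero, skellam, ← mul_assoc,
          ← ENNReal.ofReal_mul (by positivity), ← ENNReal.ofReal_mul (by positivity),
          ← Real.exp_add, ← Real.exp_add]
        congr 3
        simp only [upRate, downRate]
        linear_combination (dp + dm) * hp.2.2

lemma convPow_nonneg {p : ℤ → ℝ} (hp : ∀ z, 0 ≤ p z) (k : ℕ) (z : ℤ) : 0 ≤ convPow p k z := by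
  induction k generalizing z with
  | zero => simp only [convPow]; positivity
  | succ n ih => exact tsum_nonneg fun w => mul_nonneg (ih w) (hp _)

lemma convZ_apply_of_support_subset {f q : ℤ → ℝ}
    (hq : ∀ w : ℤ, w ∉ ({-1, 0, 1} : Set ℤ) → q w = 0) (z : ℤ) :
    convZ f q z = f (z - 1) * q 1 + f z * q 0 + f (z + 1) * q (-1) := by
  rw [convZ, tsum_eq_sum (s := {z - 1, z, z + 1}) fun w hw => by
    simp only [Finset.mem_insert, Finset.mem_singleton] at hw
    rw [hq (z - w) (by simp only [Set.mem_insert_iff, Set.mem_singleton_iff]; omega), mul_zero]]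
  rw [Finset.sum_insert (by simp only [Finset.mem_insert, Finset.mem_singleton]; omega),
    Finset.sum_insert (by simp only [Finset.mem_singleton]; omega), Finset.sum_singleton,
    _root_.sub_sub_cancel, sub_self, show z - (z + 1) = -1 by ring, add_assoc]

lemma convPow_eq_zero_of_lt_abs {p : ℤ → ℝ} (hp : ∀ w : ℤ, w ∉ ({-1, 0, 1} : Set ℤ) → p w = 0)
    (k : ℕ) {z : ℤ} (hz : k < |z|) : convPow p k z = 0 := by
  induction k generalizing z with
  | zero => exact if_neg (abs_pos.mp (by exact_mod_cast hz))
  | succ n ih =>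
    have hnear : ∀ e : ℤ, |e| ≤ 1 → (n : ℤ) < |z + e| := fun e he => by
      have := abs_add_le (z + e) (-e)
      rw [add_neg_cancel_right, abs_neg] at this
      push_cast at hz
      linarith
    rw [convPow, convZ_apply_of_support_subset hp,
      ih (by simpa [sub_eq_add_neg] using hnear (-1) (by norm_num)),
      ih (by simpa using hnear 0 (by norm_num)), ih (hnear 1 (by norm_num))]
    ring

lemma ofReal_convPow {p : ℤ → ℝ} (hp : IsProbOn3 p) (k : ℕ) (z : ℤ) :
    ENNReal.ofReal (convPow p k z) = (ConvMass.ofReal p ^ k) z := by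
  induction k generalizing z with
  | zero => simp only [convPow, pow_zero, ConvMass.one_apply]; split_ifs <;> simp
  | succ n ih =>
    have hsupp : ∀ w : ℤ, w ∉ ({-1, 0, 1} : Set ℤ) → ConvMass.ofReal p w = 0 := fun w hw => by
      simp [ConvMass.ofReal, hp.2.1 w hw]
    have hnn := convPow_nonneg hp.1 n
    rw [convPow, convZ_apply_of_support_subset hp.2.1, pow_succ,
      ConvMass.mul_apply_of_support_subset hsupp,
      ENNReal.ofReal_add (by positivity [hnn (z - 1), hnn z, hp.1 1, hp.1 0])
        (by positivity [hnn (z + 1), hp.1 (-1)]),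
      ENNReal.ofReal_add (by positivity [hnn (z - 1), hp.1 1]) (by positivity [hnn z, hp.1 0]),
      ENNReal.ofReal_mul (hnn _), ENNReal.ofReal_mul (hnn _), ENNReal.ofReal_mul (hnn _),
      ih, ih, ih]
    rfl

lemma ofReal_convZ_convPow {p : ℤ → ℝ} (hp : IsProbOn3 p) (k l : ℕ) (z : ℤ) :
    ENNReal.ofReal (convZ (convPow p k) (convPow (flipM p) l) z)
      = (ConvMass.ofReal p ^ k * ConvMass.ofReal (flipM p) ^ l) z := by
  have hout : ∀ w ∉ Finset.Icc (-(k : ℤ)) k, convPow p k w = 0 := fun w hw =>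
    convPow_eq_zero_of_lt_abs hp.2.1 k (by simp only [Finset.mem_Icc] at hw; rw [lt_abs]; omega)
  have hnn (w : ℤ) : 0 ≤ convPow p k w * convPow (flipM p) l (z - w) :=
    mul_nonneg (convPow_nonneg hp.1 k w) (convPow_nonneg (isProbOn3_flipM hp).1 l _)
  rw [ConvMass.mul_apply, convZ, tsum_eq_sum fun w hw => by rw [hout w hw, zero_mul],
    tsum_eq_sum (s := Finset.Icc (-(k : ℤ)) k) fun w hw => by
      rw [← ofReal_convPow hp, hout w hw, ENNReal.ofReal_zero, zero_mul],
    ENNReal.ofReal_sum_of_nonneg fun w _ => hnn w]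
  refine Finset.sum_congr rfl fun w _ => ?_
  rw [ENNReal.ofReal_mul (convPow_nonneg hp.1 k w), ofReal_convPow hp,
    ofReal_convPow (isProbOn3_flipM hp)]

theorem Zdist_eq_toReal_skellam {p : ℤ → ℝ} (hp : IsProbOn3 p) {dp dm : ℝ}
    (hdp : 0 ≤ dp) (hdm : 0 ≤ dm) (z : ℤ) :
    Zdist dp dm p z = (skellam (upRate dp dm p) (downRate dp dm p) z).toReal := by
  set H : ℕ → ℕ → ℝ≥0∞ := fun k l => poisMass dp k * poisMass dm l *
    (ConvMass.ofReal p ^ k * ConvMass.ofReal (flipM p) ^ l) z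
  have hH : ∑' (k : ℕ) (l : ℕ), H k l = skellam (upRate dp dm p) (downRate dp dm p) z :=
    tsum_poisMass_mul_ofReal_pow_eq_skellam hp hdp hdm z
  have hfin : ∑' (k : ℕ) (l : ℕ), H k l ≠ ⊤ := by
    rw [hH]
    exact ne_top_of_le_ne_top one_ne_top
      (skellam_le_one (upRate_nonneg hp hdp hdm) (downRate_nonneg hp hdp hdm) z)
  have hrow (k : ℕ) : ∑' l, H k l ≠ ⊤ := ne_top_of_le_ne_top hfin (ENNReal.le_tsum k)
  have hterm (k l : ℕ) : H k l ≠ ⊤ := ne_top_of_le_ne_top (hrow k) (ENNReal.le_tsum l)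
  have hreal (k l : ℕ) :
      poisP dp k * poisP dm l * convZ (convPow p k) (convPow (flipM p) l) z = (H k l).toReal := by
    have hconv : 0 ≤ convZ (convPow p k) (convPow (flipM p) l) z :=
      tsum_nonneg fun w => mul_nonneg (convPow_nonneg hp.1 k w)
        (convPow_nonneg (isProbOn3_flipM hp).1 l _)
    simp only [H, poisMass, ← ofReal_convZ_convPow hp, ENNReal.toReal_mul,
      ENNReal.toReal_ofReal (by unfold poisP; positivity : 0 ≤ poisP dp k),
      ENNReal.toReal_ofReal (by unfold poisP; positivity : 0 ≤ poisP dm l),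
      ENNReal.toReal_ofReal hconv]
  rw [← hH, ENNReal.tsum_toReal_eq hrow]
  exact tsum_congr fun k => by rw [ENNReal.tsum_toReal_eq (hterm k)]; exact tsum_congr (hreal k)

lemma psiZ_eq_one_iff (w : ℤ) : psiZ w = 1 ↔ 1 ≤ w := by unfold psiZ; omega

lemma psiZ_eq_zero_iff (w : ℤ) : psiZ w = 0 ↔ w = 0 := by unfold psiZ; omega

lemma psiZ_eq_neg_one_iff (w : ℤ) : psiZ w = -1 ↔ w ≤ -1 := by unfold psiZ; omega

lemma psiZ_eq_neg_one_or_zero_or_one (w : ℤ) : psiZ w = -1 ∨ psiZ w = 0 ∨ psiZ w = 1 := by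
  unfold psiZ; omega

lemma tsum_nat_eq_tsum_ite (F : ℤ → ℝ≥0∞) {g : ℕ → ℤ} (hg : Function.Injective g)
    {A : ℤ → Prop} [DecidablePred A] (hA : ∀ z, A z ↔ ∃ m, g m = z) :
    ∑' m, F (g m) = ∑' z, if A z then F z else 0 := by
  rw [← hg.tsum_eq fun z hz => (hA z).mp (by by_contra h; exact hz (if_neg h))]
  exact tsum_congr fun m => (if_pos ((hA _).mpr ⟨m, rfl⟩)).symm

theorem Twp_apply {p : ℤ → ℝ} (hp : IsProbOn3 p) {dp dm : ℝ} (hdp : 0 ≤ dp) (hdm : 0 ≤ dm)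
    (z : ℤ) : Twp dp dm p z = (∑' w, if psiZ w = z then
      skellam (upRate dp dm p) (downRate dp dm p) w else 0).toReal := by
  set s := skellam (upRate dp dm p) (downRate dp dm p)
  have hs (w : ℤ) : s w ≠ ⊤ := ne_top_of_le_ne_top one_ne_top
    (skellam_le_one (upRate_nonneg hp hdp hdm) (downRate_nonneg hp hdp hdm) w)
  have hZ (w : ℤ) : Zdist dp dm p w = (s w).toReal := Zdist_eq_toReal_skellam hp hdp hdm w
  unfold Twp
  split_ifs with h1 h0 hm
  · rw [tsum_congr fun m => hZ _, ← ENNReal.tsum_toReal_eq fun _ => hs _,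
      tsum_nat_eq_tsum_ite s (g := fun m : ℕ => 1 + (m : ℤ)) (fun a b h => by simpa using h)
        (A := fun w => psiZ w = z) fun w => by
          rw [h1, psiZ_eq_one_iff]; exact ⟨fun h => ⟨(w - 1).toNat, by omega⟩, by omega⟩]
  · rw [hZ, h0, tsum_eq_single 0 fun w hw => if_neg (by rwa [psiZ_eq_zero_iff]),
      if_pos ((psiZ_eq_zero_iff 0).mpr rfl)]
  · rw [tsum_congr fun m => hZ _, ← ENNReal.tsum_toReal_eq fun _ => hs _,
      tsum_nat_eq_tsum_ite s (g := fun m : ℕ => -1 - (m : ℤ)) (fun a b h => by simpa using h)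
        (A := fun w => psiZ w = z) fun w => by
          rw [hm, psiZ_eq_neg_one_iff]; exact ⟨fun h => ⟨(-1 - w).toNat, by omega⟩, by omega⟩]
  · rw [ENNReal.tsum_eq_zero.mpr fun w => if_neg (by unfold psiZ; omega), ENNReal.toReal_zero]

theorem isProbOn3_Twp {p : ℤ → ℝ} (hp : IsProbOn3 p) {dp dm : ℝ} (hdp : 0 ≤ dp) (hdm : 0 ≤ dm) :
    IsProbOn3 (Twp dp dm p) := by
  have hu := upRate_nonneg hp hdp hdm
  have hv := downRate_nonneg hp hdp hdm
  have hfin (z : ℤ) : ∑' w, (if psiZ w = z then skellam (upRate dp dm p) (downRate dp dm p) w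
      else 0) ≠ ⊤ := ne_top_of_le_ne_top one_ne_top (tsum_ite_skellam_le_one hu hv _)
  refine ⟨fun z => by rw [Twp_apply hp hdp hdm]; exact ENNReal.toReal_nonneg,
    fun z hz => ?_, ?_⟩
  · simp only [Set.mem_insert_iff, Set.mem_singleton_iff, not_or] at hz
    simp [Twp, hz.1, hz.2.1, hz.2.2]
  · rw [Twp_apply hp hdp hdm, Twp_apply hp hdp hdm, Twp_apply hp hdp hdm,
      ← ENNReal.toReal_add (hfin _) (hfin _), ← ENNReal.toReal_add (by simp [hfin]) (hfin _),
      ← ENNReal.tsum_add, ← ENNReal.tsum_add]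
    rw [← ENNReal.toReal_one, ← tsum_skellam hu hv]
    congr 1
    refine tsum_congr fun w => ?_
    rcases psiZ_eq_neg_one_or_zero_or_one w with h | h | h <;> simp [h]

/-! ### Chernoff bounds and preservation of skewness -/

/-- The hypotheses of the theorem for `c = 8` and `D = 10⁵`. -/
structure Regime (dp dm : ℝ) : Prop where
  dm_pos : 0 < dm
  dm_lt_dp : dm < dp
  le_dp : 100000 ≤ dp
  gap : 8 * Real.sqrt (dp * Real.log dp) ≤ dp - dm

/-- The Chernoff tilt: for `d₋ ≥ 1` it minimises `d₊ / t + d₋ t`; the cap `max d₋ 1` keeps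
`t ≤ √d₊`. -/
def tilt (dp dm : ℝ) : ℝ := Real.sqrt (dp / max dm 1)

/-- The Chernoff bound `exp (3 - 16 log d₊)` on the left tails of `Z_p` for skewed `p`. -/
def tailBound (dp : ℝ) : ℝ := Real.exp 3 * (dp ^ 16)⁻¹

section Tilt

variable {dp dm : ℝ}

lemma tilt_nonneg : 0 ≤ tilt dp dm := Real.sqrt_nonneg _

lemma tailBound_nonneg : 0 ≤ tailBound dp := by unfold tailBound; positivity

lemma one_le_tilt (hmd : dm ≤ dp) (hdp : 1 ≤ dp) : 1 ≤ tilt dp dm :=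
  Real.one_le_sqrt.mpr ((one_le_div (by positivity)).mpr (max_le hmd hdp))

lemma tilt_le_sqrt (hdp : 0 ≤ dp) : tilt dp dm ≤ Real.sqrt dp :=
  Real.sqrt_le_sqrt (div_le_self hdp (le_max_right _ _))

lemma tilt_le_self (hdp : 1 ≤ dp) : tilt dp dm ≤ dp := by
  refine (tilt_le_sqrt (by linarith)).trans ?_
  rw [Real.sqrt_le_left (by linarith)]
  nlinarith

lemma tilt_eq (hdp : 0 ≤ dp) : tilt dp dm = Real.sqrt dp / Real.sqrt (max dm 1) :=
  Real.sqrt_div hdp _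

lemma div_tilt_eq (hdp : 0 < dp) : dp / tilt dp dm = Real.sqrt dp * Real.sqrt (max dm 1) := by
  have ha := Real.sqrt_pos.mpr hdp
  rw [tilt_eq hdp.le, div_div_eq_mul_div, div_eq_iff ha.ne']
  nth_rw 1 [← Real.mul_self_sqrt hdp.le]
  ring

lemma max_mul_tilt_eq (hdp : 0 ≤ dp) :
    max dm 1 * tilt dp dm = Real.sqrt dp * Real.sqrt (max dm 1) := by
  have hb : 0 < Real.sqrt (max dm 1) := Real.sqrt_pos.mpr (by positivity)
  rw [tilt_eq hdp, mul_div_assoc', div_eq_iff hb.ne']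
  nth_rw 1 [← Real.mul_self_sqrt (show 0 ≤ max dm 1 by positivity)]
  ring

lemma chernoff_exponent_le_two_sqrt {u v : ℝ} (hmd : dm ≤ dp) (hdp : 1 ≤ dp) (hu : dp - 1 ≤ u)
    (hv : v ≤ dm + (dp ^ 9)⁻¹) :
    u / tilt dp dm - u + (v * tilt dp dm - v)
      ≤ 2 * (Real.sqrt dp * Real.sqrt (max dm 1)) - dp - dm + 2 := by
  have ht := one_le_tilt hmd hdp
  have ht0 : 0 < tilt dp dm := by linarith
  have hslack : (dp ^ 9)⁻¹ * tilt dp dm ≤ 1 :=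
    inv_mul_le_one_of_le₀ ((tilt_le_self hdp).trans (le_self_pow₀ hdp (by norm_num)))
      (by positivity)
  have hu' : u * (1 / tilt dp dm - 1) ≤ (dp - 1) * (1 / tilt dp dm - 1) :=
    mul_le_mul_of_nonpos_right hu (by rw [sub_nonpos, div_le_one ht0]; exact ht)
  have hv' : v * (tilt dp dm - 1) ≤ (dm + (dp ^ 9)⁻¹) * (tilt dp dm - 1) :=
    mul_le_mul_of_nonneg_right hv (by linarith)
  have hdm_t : dm * tilt dp dm ≤ max dm 1 * tilt dp dm :=
    mul_le_mul_of_nonneg_right (le_max_left _ _) ht0.le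
  have h1 := div_tilt_eq (dm := dm) (show 0 < dp by linarith)
  have h2 := max_mul_tilt_eq (dm := dm) (show 0 ≤ dp by linarith)
  have hinv : 0 < 1 / tilt dp dm := by positivity
  have hε : 0 ≤ (dp ^ 9)⁻¹ := by positivity
  calc u / tilt dp dm - u + (v * tilt dp dm - v)
      = u * (1 / tilt dp dm - 1) + v * (tilt dp dm - 1) := by ring
    _ ≤ (dp - 1) * (1 / tilt dp dm - 1) + (dm + (dp ^ 9)⁻¹) * (tilt dp dm - 1) := by linarith
    _ = dp / tilt dp dm - dp - 1 / tilt dp dm + 1 + dm * tilt dp dm - dm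
          + (dp ^ 9)⁻¹ * tilt dp dm - (dp ^ 9)⁻¹ := by ring
    _ ≤ _ := by linarith

end Tilt

lemma log_le_two_sqrt {x : ℝ} (hx : 0 < x) : Real.log x ≤ 2 * Real.sqrt x := by
  have h := Real.log_le_sub_one_of_pos (Real.sqrt_pos.mpr hx)
  rw [Real.log_sqrt hx.le] at h
  linarith

lemma exp_three_le : Real.exp 3 ≤ 21 := by
  have h := Real.exp_one_lt_d9.le
  rw [show (3 : ℝ) = (3 : ℕ) * 1 by norm_num, Real.exp_nat_mul]
  calc Real.exp 1 ^ 3 ≤ 2.7182818286 ^ 3 := pow_le_pow_left₀ (Real.exp_pos 1).le h 3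
    _ ≤ 21 := by norm_num

lemma tailBound_le {dp : ℝ} (hdp : 100000 ≤ dp) : tailBound dp ≤ (dp ^ 10)⁻¹ := by
  have h6 : 21 ≤ dp ^ 6 := by
    linarith [le_self_pow₀ (by linarith : (1 : ℝ) ≤ dp) (by norm_num : 6 ≠ 0)]
  rw [tailBound, show dp ^ 16 = dp ^ 6 * dp ^ 10 by ring, mul_inv, ← mul_assoc]
  refine mul_le_of_le_one_left (by positivity) ?_
  rw [← div_eq_mul_inv, div_le_one (by positivity)]
  linarith [exp_three_le]

lemma mul_one_add_exp_mul_tilt_mul_tailBound_le {dp dm : ℝ} (hdp : 100000 ≤ dp) :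
    dp * (1 + Real.exp 1 * tilt dp dm) * tailBound dp ≤ 1 / 16 := by
  have hdp0 : 0 < dp := by linarith
  have ht := tilt_le_self (dm := dm) (by linarith : 1 ≤ dp)
  have ht0 : 0 ≤ tilt dp dm := tilt_nonneg
  have he : Real.exp 1 ≤ 3 := by linarith [Real.exp_one_lt_d9]
  have h1 : 1 + Real.exp 1 * tilt dp dm ≤ 4 * dp := by nlinarith [Real.exp_pos 1]
  have h13 : 1344 ≤ dp ^ 13 := by
    linarith [le_self_pow₀ (by linarith : (1 : ℝ) ≤ dp) (by norm_num : 13 ≠ 0)]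
  calc dp * (1 + Real.exp 1 * tilt dp dm) * tailBound dp
      ≤ dp * (4 * dp) * (21 * (dp ^ 16)⁻¹) := by
        rw [tailBound]
        gcongr
        exact exp_three_le
    _ = 84 / dp ^ 14 := by field_simp; ring
    _ ≤ 1 / 16 := by
        rw [div_le_div_iff₀ (by positivity) (by norm_num)]
        nlinarith

section Skewed

variable {dp dm : ℝ} {p q : ℤ → ℝ}

lemma apply_neg_one_le_of_skewed (hp : IsProbOn3 p) (hs : Skewed dp p) :
    p (-1) ≤ (dp ^ 10)⁻¹ := by
  linarith [hp.1 0, hp.2.2, show 1 - (dp ^ 10)⁻¹ ≤ p 1 from hs]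

lemma abs_sub_apply_one_le_of_skewed (hp : IsProbOn3 p) (hsp : Skewed dp p) (hq : IsProbOn3 q)
    (hsq : Skewed dp q) : |p 1 - q 1| ≤ (dp ^ 10)⁻¹ := by
  have hp1 : p 1 ≤ 1 := by linarith [hp.1 0, hp.1 (-1), hp.2.2]
  have hq1 : q 1 ≤ 1 := by linarith [hq.1 0, hq.1 (-1), hq.2.2]
  rw [abs_le]
  constructor <;>
    linarith [show 1 - (dp ^ 10)⁻¹ ≤ p 1 from hsp, show 1 - (dp ^ 10)⁻¹ ≤ q 1 from hsq]

lemma abs_sub_apply_neg_one_le_of_skewed (hp : IsProbOn3 p) (hsp : Skewed dp p)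
    (hq : IsProbOn3 q) (hsq : Skewed dp q) : |p (-1) - q (-1)| ≤ (dp ^ 10)⁻¹ := by
  rw [abs_le]
  constructor <;> linarith [apply_neg_one_le_of_skewed hp hsp, apply_neg_one_le_of_skewed hq hsq,
    hp.1 (-1), hq.1 (-1)]

lemma mul_inv_pow_ten (hdp : 0 < dp) : dp * (dp ^ 10)⁻¹ = (dp ^ 9)⁻¹ := by
  field_simp

lemma sub_one_le_upRate (hp : IsProbOn3 p) (hs : Skewed dp p) (hdp : 1 ≤ dp) (hdm : 0 ≤ dm) :
    dp - 1 ≤ upRate dp dm p := by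
  have h9 : (dp ^ 9)⁻¹ ≤ 1 := inv_le_one_of_one_le₀ (one_le_pow₀ hdp)
  have hmul : dp * (1 - (dp ^ 10)⁻¹) ≤ dp * p 1 := mul_le_mul_of_nonneg_left hs (by linarith)
  rw [mul_sub, mul_one, mul_inv_pow_ten (by linarith)] at hmul
  linarith [mul_nonneg hdm (hp.1 (-1)), show upRate dp dm p = dp * p 1 + dm * p (-1) from rfl]

lemma downRate_le (hp : IsProbOn3 p) (hs : Skewed dp p) (hdp : 0 < dp) (hdm : 0 ≤ dm) :
    downRate dp dm p ≤ dm + (dp ^ 9)⁻¹ := by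
  have h1 : dp * p (-1) ≤ (dp ^ 9)⁻¹ := by
    rw [← mul_inv_pow_ten hdp]
    exact mul_le_mul_of_nonneg_left (apply_neg_one_le_of_skewed hp hs) hdp.le
  have h2 : dm * p 1 ≤ dm := mul_le_of_le_one_right hdm (by linarith [hp.1 0, hp.1 (-1), hp.2.2])
  linarith [show downRate dp dm p = dp * p (-1) + dm * p 1 from rfl]

end Skewed

lemma tsum_ite_add_tsum_ite_not {ι : Type*} (f : ι → ℝ≥0∞) (A : ι → Prop) [DecidablePred A] :
    ∑' i, (if A i then f i else 0) + ∑' i, (if ¬A i then f i else 0) = ∑' i, f i := by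
  rw [← ENNReal.tsum_add]
  exact tsum_congr fun i => by split_ifs <;> simp

namespace Regime

variable {dp dm : ℝ}

lemma one_le_dp (h : Regime dp dm) : 1 ≤ dp := by linarith [h.le_dp]

lemma dp_pos (h : Regime dp dm) : 0 < dp := by linarith [h.le_dp]

lemma two_sqrt_mul_sqrt_max_sub_le (h : Regime dp dm) :
    2 * (Real.sqrt dp * Real.sqrt (max dm 1)) - dp - dm ≤ -(16 * Real.log dp) + 1 := by
  have hdp0 := h.dp_pos
  have ha := Real.mul_self_sqrt hdp0.le
  have hlog := log_le_two_sqrt hdp0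
  rcases le_or_gt dm 1 with hdm1 | hdm1
  · have h34 : 34 ≤ Real.sqrt dp := Real.le_sqrt_of_sq_le (by linarith [h.le_dp])
    rw [max_eq_right hdm1, Real.sqrt_one]
    nlinarith [h.dm_pos]
  · have hb := Real.mul_self_sqrt h.dm_pos.le
    have hba : Real.sqrt dm ≤ Real.sqrt dp := Real.sqrt_le_sqrt h.dm_lt_dp.le
    have hlog0 : 0 ≤ Real.log dp := Real.log_nonneg h.one_le_dp
    have hgap : 8 * (Real.sqrt dp * Real.sqrt (Real.log dp)) ≤ dp - dm := by
      rw [← Real.sqrt_mul hdp0.le]; exact h.gap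
    -- `√d₊ - √d₋ = (d₊ - d₋) / (√d₊ + √d₋) ≥ 4 √(log d₊)`
    have hdiff : 4 * Real.sqrt (Real.log dp) ≤ Real.sqrt dp - Real.sqrt dm := by
      by_contra hc
      have hab : 0 < Real.sqrt dp + Real.sqrt dm := by positivity
      have := mul_lt_mul_of_pos_right (not_le.mp hc) hab
      nlinarith [Real.sqrt_nonneg (Real.log dp)]
    have hsq := Real.mul_self_sqrt hlog0
    rw [max_eq_left hdm1.le]
    nlinarith [Real.sqrt_nonneg (Real.log dp)]

lemma chernoff_exponent_le (h : Regime dp dm) {u v : ℝ} (hu : dp - 1 ≤ u)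
    (hv : v ≤ dm + (dp ^ 9)⁻¹) :
    u / tilt dp dm - u + (v * tilt dp dm - v) ≤ -(16 * Real.log dp) + 3 := by
  linarith [chernoff_exponent_le_two_sqrt h.dm_lt_dp.le h.one_le_dp hu hv,
    h.two_sqrt_mul_sqrt_max_sub_le]

lemma tsum_ite_le_skellam_le (h : Regime dp dm) {u v : ℝ} (hv0 : 0 ≤ v) (hu : dp - 1 ≤ u)
    (hv : v ≤ dm + (dp ^ 9)⁻¹) (m : ℤ) :
    ∑' z, (if z ≤ m then skellam u v z else 0)
      ≤ ENNReal.ofReal (tilt dp dm ^ m * tailBound dp) := by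
  have ht := one_le_tilt h.dm_lt_dp.le h.one_le_dp
  refine (tsum_ite_skellam_le_le_chernoff (by linarith [h.one_le_dp]) hv0 ht m).trans
    (ENNReal.ofReal_le_ofReal (mul_le_mul_of_nonneg_left ?_ (zpow_nonneg (by linarith) m)))
  calc Real.exp (u / tilt dp dm - u + (v * tilt dp dm - v))
      ≤ Real.exp (-(16 * Real.log dp) + 3) := Real.exp_le_exp.mpr (h.chernoff_exponent_le hu hv)
    _ = tailBound dp := by
        have hdp : 0 < dp := by linarith [h.le_dp]
        rw [Real.exp_add, Real.exp_neg, tailBound, mul_comm,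
          show 16 * Real.log dp = Real.log (dp ^ 16) by rw [Real.log_pow]; norm_num,
          Real.exp_log (by positivity)]

theorem skewed_Twp (h : Regime dp dm) {p : ℤ → ℝ} (hp : IsProbOn3 p) (hs : Skewed dp p) :
    Skewed dp (Twp dp dm p) := by
  have hdp := h.one_le_dp
  have hu := upRate_nonneg hp h.dp_pos.le h.dm_pos.le
  have hv := downRate_nonneg hp h.dp_pos.le h.dm_pos.le
  set s := skellam (upRate dp dm p) (downRate dp dm p)
  have hsplit := tsum_ite_add_tsum_ite_not s (fun w => psiZ w = 1)
  rw [tsum_skellam hu hv] at hsplit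
  have hfin : ∑' w, (if psiZ w = 1 then s w else 0) ≠ ⊤ :=
    ne_top_of_le_ne_top one_ne_top (tsum_ite_skellam_le_one hu hv _)
  have htail : ∑' w, (if ¬psiZ w = 1 then s w else 0) ≤ ENNReal.ofReal (tailBound dp) := by
    calc ∑' w, (if ¬psiZ w = 1 then s w else 0) = ∑' w, (if w ≤ 0 then s w else 0) :=
          tsum_congr fun w => if_congr (by rw [psiZ_eq_one_iff]; omega) rfl rfl
      _ ≤ ENNReal.ofReal (tilt dp dm ^ (0 : ℤ) * tailBound dp) :=
          h.tsum_ite_le_skellam_le hv (sub_one_le_upRate hp hs hdp h.dm_pos.le)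
            (downRate_le hp hs h.dp_pos h.dm_pos.le) 0
      _ = ENNReal.ofReal (tailBound dp) := by rw [zpow_zero, one_mul]
  have hreal := congrArg ENNReal.toReal hsplit
  rw [ENNReal.toReal_add hfin (ne_top_of_le_ne_top ofReal_ne_top htail),
    ENNReal.toReal_one] at hreal
  have := ENNReal.toReal_le_of_le_ofReal (by unfold tailBound; positivity) htail
  show 1 - (dp ^ 10)⁻¹ ≤ Twp dp dm p 1
  rw [Twp_apply hp h.dp_pos.le h.dm_pos.le]
  linarith [tailBound_le h.le_dp]

end Regime

/-! ### Contraction -/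

lemma psiZ_add_ne_psiZ {d w : ℤ} (h : psiZ (d + w) ≠ psiZ w) :
    (1 ≤ d ∧ w ≤ 0) ∨ (d ≤ -1 ∧ w ≤ -d) := by
  unfold psiZ at h; omega

lemma ite_psiZ_add_ne_le (D W : ℤ → ℝ≥0∞) (d w : ℤ) :
    (if psiZ (d + w) ≠ psiZ w then D d * W w else 0)
      ≤ (if 1 ≤ d then D d else 0) * (if w ≤ 0 then W w else 0)
        + D d * (if d ≤ -1 then (if w ≤ -d then W w else 0) else 0) := by
  by_cases hne : psiZ (d + w) ≠ psiZ w
  · rw [if_pos hne]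
    rcases psiZ_add_ne_psiZ hne with ⟨hd, hw⟩ | ⟨hd, hw⟩
    · simp [hd, hw, show ¬d ≤ -1 by omega]
    · simp [hd, hw, show ¬1 ≤ d by omega]
  · rw [if_neg hne]
    exact zero_le

lemma abs_toReal_sub_toReal_le {a b c : ℝ≥0∞} (hab : a ≤ b + c) (hba : b ≤ a + c)
    (ha : a ≠ ⊤) (hb : b ≠ ⊤) (hc : c ≠ ⊤) : |a.toReal - b.toReal| ≤ c.toReal := by
  have h1 := ENNReal.toReal_mono (ENNReal.add_ne_top.mpr ⟨hb, hc⟩) hab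
  have h2 := ENNReal.toReal_mono (ENNReal.add_ne_top.mpr ⟨ha, hc⟩) hba
  rw [ENNReal.toReal_add hb hc] at h1
  rw [ENNReal.toReal_add ha hc] at h2
  rw [abs_le]
  constructor <;> linarith

lemma tsum_tsum_ite_le_add {f : ℤ → ℤ → ℝ≥0∞} {P Q R : ℤ → ℤ → Prop} [∀ d w, Decidable (P d w)]
    [∀ d w, Decidable (Q d w)] [∀ d w, Decidable (R d w)] (h : ∀ d w, P d w → Q d w ∨ R d w) :
    ∑' (d : ℤ) (w : ℤ), (if P d w then f d w else 0)
      ≤ ∑' (d : ℤ) (w : ℤ), (if Q d w then f d w else 0)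
        + ∑' (d : ℤ) (w : ℤ), (if R d w then f d w else 0) := by
  simp only [← ENNReal.tsum_add]
  refine ENNReal.tsum_le_tsum fun d => ENNReal.tsum_le_tsum fun w => ?_
  by_cases hP : P d w
  · rcases h d w hP with hQ | hR
    · rw [if_pos hP, if_pos hQ]; exact le_add_right le_rfl
    · rw [if_pos hP, if_pos hR]; exact le_add_left le_rfl
  · simp [hP]

section Coupling

variable {u₀ v₀ du dv : ℝ}

lemma tsum_ite_skellam_add_eq (hu₀ : 0 ≤ u₀) (hv₀ : 0 ≤ v₀) (hdu : 0 ≤ du) (hdv : 0 ≤ dv)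
    (A : ℤ → Prop) [DecidablePred A] :
    ∑' z, (if A z then skellam (u₀ + du) (v₀ + dv) z else 0)
      = ∑' (d : ℤ) (w : ℤ), if A (d + w) then skellam du dv d * skellam u₀ v₀ w else 0 :=
  calc ∑' z, (if A z then skellam (u₀ + du) (v₀ + dv) z else 0)
      = ∑' (z : ℤ) (d : ℤ), if A z then skellam du dv d * skellam u₀ v₀ (z - d) else 0 := by
        refine tsum_congr fun z => ?_
        rw [skellam_add hu₀ hv₀ hdu hdv]
        split_ifs <;> simp
    _ = ∑' (d : ℤ) (z : ℤ), if A z then skellam du dv d * skellam u₀ v₀ (z - d) else 0 :=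
        ENNReal.tsum_comm
    _ = _ := tsum_congr fun d => by
        rw [← (Equiv.addLeft d).tsum_eq]
        simp only [Equiv.coe_addLeft, add_sub_cancel_left]

lemma tsum_ite_skellam_eq (hdu : 0 ≤ du) (hdv : 0 ≤ dv) (A : ℤ → Prop) [DecidablePred A] :
    ∑' w, (if A w then skellam u₀ v₀ w else 0)
      = ∑' (d : ℤ) (w : ℤ), if A w then skellam du dv d * skellam u₀ v₀ w else 0 := by
  simp only [← mul_ite_zero, ENNReal.tsum_mul_left, ENNReal.tsum_mul_right, tsum_skellam hdu hdv,
    one_mul]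

/-- `D + W` and `W` can only fall on different sides of the clamping `ψ` when `D ≥ 1, W ≤ 0`
or `D ≤ -1, W ≤ -D`; both events are controlled by the Chernoff bound for `W`. -/
lemma Regime.tsum_tsum_ite_psiZ_ne_le {dp dm : ℝ} (h : Regime dp dm) (hv₀ : 0 ≤ v₀)
    (hu : dp - 1 ≤ u₀) (hv : v₀ ≤ dm + (dp ^ 9)⁻¹) (hdu : 0 ≤ du) (hdv : 0 ≤ dv)
    (hdvt : dv * tilt dp dm ≤ 1) :
    ∑' (d : ℤ) (w : ℤ), (if psiZ (d + w) ≠ psiZ w then skellam du dv d * skellam u₀ v₀ w else 0)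
      ≤ ENNReal.ofReal ((du + Real.exp 1 * tilt dp dm * dv) * tailBound dp) := by
  have ht := one_le_tilt h.dm_lt_dp.le h.one_le_dp
  have hτ : 0 ≤ tailBound dp := tailBound_nonneg
  set D := skellam du dv
  set W := skellam u₀ v₀
  have hneg (d : ℤ) : D d * (if d ≤ -1 then ∑' w, (if w ≤ -d then W w else 0) else 0)
      ≤ D d * (if d ≤ -1 then ENNReal.ofReal (tilt dp dm ^ (-d)) else 0) *
          ENNReal.ofReal (tailBound dp) := by
    rw [mul_assoc]
    gcongr
    split_ifs
    · rw [← ENNReal.ofReal_mul (zpow_nonneg (by linarith) _)]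
      exact h.tsum_ite_le_skellam_le hv₀ hu hv (-d)
    · simp
  calc ∑' (d : ℤ) (w : ℤ), (if psiZ (d + w) ≠ psiZ w then D d * W w else 0)
      ≤ ∑' (d : ℤ) (w : ℤ), ((if 1 ≤ d then D d else 0) * (if w ≤ 0 then W w else 0)
          + D d * (if d ≤ -1 then (if w ≤ -d then W w else 0) else 0)) :=
        ENNReal.tsum_le_tsum fun d => ENNReal.tsum_le_tsum fun w => ite_psiZ_add_ne_le D W d w
    _ = (∑' d, if 1 ≤ d then D d else 0) * (∑' w, if w ≤ 0 then W w else 0)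
          + ∑' d, D d * (if d ≤ -1 then ∑' w, (if w ≤ -d then W w else 0) else 0) := by
        simp only [ENNReal.tsum_add, ENNReal.tsum_mul_left, ENNReal.tsum_mul_right]
        congr 2
        ext d
        split_ifs <;> simp
    _ ≤ ENNReal.ofReal du * ENNReal.ofReal (tailBound dp)
          + ENNReal.ofReal (dv * tilt dp dm * Real.exp (dv * tilt dp dm)) *
            ENNReal.ofReal (tailBound dp) := by
        gcongr
        · exact tsum_ite_one_le_skellam_le hdu hdv
        · simpa using h.tsum_ite_le_skellam_le hv₀ hu hv 0
        · calc ∑' d, D d * (if d ≤ -1 then ∑' w, (if w ≤ -d then W w else 0) else 0)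
              ≤ ∑' d, D d * (if d ≤ -1 then ENNReal.ofReal (tilt dp dm ^ (-d)) else 0) *
                  ENNReal.ofReal (tailBound dp) := ENNReal.tsum_le_tsum hneg
            _ ≤ _ := by
                rw [ENNReal.tsum_mul_right]
                gcongr
                exact tsum_skellam_mul_ite_le_neg_one_le hdu hdv ht
    _ ≤ ENNReal.ofReal ((du + Real.exp 1 * tilt dp dm * dv) * tailBound dp) := by
        rw [← ENNReal.ofReal_mul hdu, ← ENNReal.ofReal_mul (by positivity),
          ← ENNReal.ofReal_add (by positivity) (by positivity)]
        refine ENNReal.ofReal_le_ofReal ?_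
        have hx : 0 ≤ dv * tilt dp dm := mul_nonneg hdv (by linarith)
        have := mul_le_mul_of_nonneg_left (Real.exp_le_exp.mpr hdvt) hx
        nlinarith

lemma Regime.abs_toReal_tsum_ite_psiZ_skellam_add_sub_le {dp dm : ℝ} (h : Regime dp dm)
    (hv₀ : 0 ≤ v₀) (hu : dp - 1 ≤ u₀) (hv : v₀ ≤ dm + (dp ^ 9)⁻¹) (hdu : 0 ≤ du) (hdv : 0 ≤ dv)
    (hdvt : dv * tilt dp dm ≤ 1) (z : ℤ) :
    |(∑' w, if psiZ w = z then skellam (u₀ + du) (v₀ + dv) w else 0).toReal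
      - (∑' w, if psiZ w = z then skellam u₀ v₀ w else 0).toReal|
      ≤ (du + Real.exp 1 * tilt dp dm * dv) * tailBound dp := by
  have hu₀ : 0 ≤ u₀ := by linarith [h.one_le_dp]
  have hE := h.tsum_tsum_ite_psiZ_ne_le hv₀ hu hv hdu hdv hdvt
  have hfin {a b : ℝ} (ha : 0 ≤ a) (hb : 0 ≤ b) :
      ∑' w, (if psiZ w = z then skellam a b w else 0) ≠ ⊤ :=
    ne_top_of_le_ne_top one_ne_top (tsum_ite_skellam_le_one ha hb _)
  refine (abs_toReal_sub_toReal_le ?_ ?_ (hfin (add_nonneg hu₀ hdu) (add_nonneg hv₀ hdv))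
    (hfin hu₀ hv₀) (ne_top_of_le_ne_top ofReal_ne_top hE)).trans
    (ENNReal.toReal_le_of_le_ofReal (mul_nonneg (add_nonneg hdu (mul_nonneg (mul_nonneg
      (Real.exp_pos 1).le tilt_nonneg) hdv)) tailBound_nonneg) hE)
  all_goals
    rw [tsum_ite_skellam_add_eq hu₀ hv₀ hdu hdv, tsum_ite_skellam_eq (u₀ := u₀) (v₀ := v₀) hdu hdv]
    refine tsum_tsum_ite_le_add fun d w hdw => ?_
    by_cases hne : psiZ (d + w) = psiZ w
    · exact Or.inl (by rw [← hdw, hne])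
    · exact Or.inr hne

end Coupling

lemma sub_min_add_sub_min (a b : ℝ) : a - min a b + (b - min a b) = |a - b| := by
  rcases le_total a b with hab | hab
  · rw [min_eq_left hab, abs_of_nonpos (by linarith)]; ring
  · rw [min_eq_right hab, abs_of_nonneg (by linarith)]; ring

namespace Regime

variable {dp dm : ℝ}

lemma abs_Twp_sub_le (h : Regime dp dm) {r : ℤ → ℝ} (hr : IsProbOn3 r) {u₀ v₀ : ℝ}
    (hv₀ : 0 ≤ v₀) (hu : dp - 1 ≤ u₀) (hv : v₀ ≤ dm + (dp ^ 9)⁻¹) (hur : u₀ ≤ upRate dp dm r)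
    (hvr : v₀ ≤ downRate dp dm r) (hdvt : (downRate dp dm r - v₀) * tilt dp dm ≤ 1) (z : ℤ) :
    |Twp dp dm r z - (∑' w, if psiZ w = z then skellam u₀ v₀ w else 0).toReal|
      ≤ (upRate dp dm r - u₀ + Real.exp 1 * tilt dp dm * (downRate dp dm r - v₀))
          * tailBound dp := by
  have := h.abs_toReal_tsum_ite_psiZ_skellam_add_sub_le hv₀ hu hv (sub_nonneg.mpr hur)
    (sub_nonneg.mpr hvr) hdvt z
  rwa [add_sub_cancel, add_sub_cancel, ← Twp_apply hr h.dp_pos.le h.dm_pos.le] at this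

lemma mul_sum_abs_sub_mul_tilt_le_one (h : Regime dp dm) {p q : ℤ → ℝ} (hp : IsProbOn3 p)
    (hsp : Skewed dp p) (hq : IsProbOn3 q) (hsq : Skewed dp q) :
    dp * (|p 1 - q 1| + |p (-1) - q (-1)|) * tilt dp dm ≤ 1 := by
  have hdp := h.one_le_dp
  have hΔ : |p 1 - q 1| + |p (-1) - q (-1)| ≤ 2 * (dp ^ 10)⁻¹ := by
    linarith [abs_sub_apply_one_le_of_skewed hp hsp hq hsq,
      abs_sub_apply_neg_one_le_of_skewed hp hsp hq hsq]
  have h8 : 2 ≤ dp ^ 8 := by linarith [le_self_pow₀ hdp (by norm_num : 8 ≠ 0), h.le_dp]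
  calc dp * (|p 1 - q 1| + |p (-1) - q (-1)|) * tilt dp dm ≤ dp * (2 * (dp ^ 10)⁻¹) * dp :=
        mul_le_mul (mul_le_mul_of_nonneg_left hΔ (by linarith)) (tilt_le_self hdp) tilt_nonneg
          (by positivity)
    _ = 2 / dp ^ 8 := by field_simp
    _ ≤ 1 := by rw [div_le_one (by positivity)]; exact h8

/-- Couple `Z_p` and `Z_q` through a Skellam variable `W` with the smaller rates of both. -/
theorem abs_Twp_sub_Twp_le (h : Regime dp dm) {p q : ℤ → ℝ} (hp : IsProbOn3 p)
    (hsp : Skewed dp p) (hq : IsProbOn3 q) (hsq : Skewed dp q) (z : ℤ) :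
    |Twp dp dm p z - Twp dp dm q z| ≤ 1 / 16 * (|p 1 - q 1| + |p (-1) - q (-1)|) := by
  set Δ := |p 1 - q 1| + |p (-1) - q (-1)|
  set u₀ := min (upRate dp dm p) (upRate dp dm q) with hu₀_def
  set v₀ := min (downRate dp dm p) (downRate dp dm q) with hv₀_def
  set t := tilt dp dm
  have hdp := h.one_le_dp
  have hΔu := abs_upRate_sub_le h.dm_pos.le h.dm_lt_dp.le p q
  have hΔv := abs_downRate_sub_le h.dm_pos.le h.dm_lt_dp.le p q
  have hu₀ : dp - 1 ≤ u₀ := le_min (sub_one_le_upRate hp hsp hdp h.dm_pos.le)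
    (sub_one_le_upRate hq hsq hdp h.dm_pos.le)
  have hv₀ : v₀ ≤ dm + (dp ^ 9)⁻¹ :=
    (min_le_left _ _).trans (downRate_le hp hsp h.dp_pos h.dm_pos.le)
  have hv₀0 : 0 ≤ v₀ := le_min (downRate_nonneg hp h.dp_pos.le h.dm_pos.le)
    (downRate_nonneg hq h.dp_pos.le h.dm_pos.le)
  have hdv : downRate dp dm p - v₀ + (downRate dp dm q - v₀) ≤ dp * Δ :=
    (sub_min_add_sub_min _ _).trans_le hΔv
  have hdvp : 0 ≤ downRate dp dm p - v₀ := sub_nonneg.mpr (min_le_left _ _)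
  have hdvq : 0 ≤ downRate dp dm q - v₀ := sub_nonneg.mpr (min_le_right _ _)
  have hdvt {r : ℝ} (hr : r - v₀ ≤ dp * Δ) : (r - v₀) * t ≤ 1 :=
    (mul_le_mul_of_nonneg_right hr tilt_nonneg).trans
      (h.mul_sum_abs_sub_mul_tilt_le_one hp hsp hq hsq)
  have hp' := h.abs_Twp_sub_le hp hv₀0 hu₀ hv₀ (min_le_left _ _) (min_le_left _ _)
    (hdvt (by linarith)) z
  have hq' := h.abs_Twp_sub_le hq hv₀0 hu₀ hv₀ (min_le_right _ _) (min_le_right _ _)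
    (hdvt (by linarith)) z
  set X := (∑' w, if psiZ w = z then skellam u₀ v₀ w else 0).toReal
  calc |Twp dp dm p z - Twp dp dm q z|
      ≤ |Twp dp dm p z - X| + |Twp dp dm q z - X| := by
        simpa only [abs_sub_comm X] using abs_sub_le (Twp dp dm p z) X (Twp dp dm q z)
    _ ≤ (upRate dp dm p - u₀ + Real.exp 1 * t * (downRate dp dm p - v₀)) * tailBound dp
          + (upRate dp dm q - u₀ + Real.exp 1 * t * (downRate dp dm q - v₀)) * tailBound dp :=
        add_le_add hp' hq'
    _ = (|upRate dp dm p - upRate dp dm q| + Real.exp 1 * t * |downRate dp dm p - downRate dp dm q|)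
          * tailBound dp := by
        rw [← sub_min_add_sub_min (upRate dp dm p), ← sub_min_add_sub_min (downRate dp dm p),
          hu₀_def, hv₀_def]
        ring
    _ ≤ (dp * Δ + Real.exp 1 * t * (dp * Δ)) * tailBound dp := by
        gcongr <;> first | exact tailBound_nonneg | exact mul_nonneg (Real.exp_pos 1).le tilt_nonneg
    _ = dp * (1 + Real.exp 1 * t) * tailBound dp * Δ := by ring
    _ ≤ 1 / 16 * Δ := by
        gcongr
        exact mul_one_add_exp_mul_tilt_mul_tailBound_le h.le_dp

end Regime

lemma isClosed_setOf_isProbOn3_and_skewed (dp : ℝ) :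
    IsClosed {p : ℤ → ℝ | IsProbOn3 p ∧ Skewed dp p} := by
  simp only [IsProbOn3, Skewed, Set.ofPred_and, Set.ofPred_forall]
  refine ((isClosed_iInter fun z => isClosed_le continuous_const (continuous_apply z)).inter
    ((isClosed_iInter fun z => isClosed_iInter fun _ => isClosed_eq (continuous_apply z)
      continuous_const).inter (isClosed_eq ?_ continuous_const))).inter
    (isClosed_le continuous_const (continuous_apply 1))
  fun_prop

lemma isProbOn3_delta1 : IsProbOn3 delta1 := by
  refine ⟨fun z => by unfold delta1; split_ifs <;> norm_num, fun z hz => if_neg ?_,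
    by norm_num [delta1]⟩
  simp only [Set.mem_insert_iff, Set.mem_singleton_iff, not_or] at hz
  exact hz.2.2

lemma skewed_delta1 (dp : ℝ) : Skewed dp delta1 := by
  simp only [Skewed, delta1, if_true, sub_le_self_iff]
  positivity

end SkewedFixedPoint

end

/-- Proposition 2.5: the operator `𝒯` has a unique skewed fixed point `p*`, and
`𝒯^t(0,0,1) → p*` as `t → ∞`. -/
theorem unique_skewed_fixed_point :
    ∃ c : ℝ, 0 < c ∧ ∃ D : ℝ, ∀ dp dm : ℝ,
    0 < dm → dm < dp → D ≤ dp → c * Real.sqrt (dp * Real.log dp) ≤ dp - dm →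
    ∃ pstar : ℤ → ℝ,
      (IsProbOn3 pstar ∧ Skewed dp pstar ∧ Twp dp dm pstar = pstar) ∧
      (∀ q : ℤ → ℝ, IsProbOn3 q → Skewed dp q → Twp dp dm q = q → q = pstar) ∧
      ∀ z : ℤ, Filter.Tendsto (fun t : ℕ => ((Twp dp dm)^[t] delta1) z)
        Filter.atTop (nhds (pstar z)) := by
  refine ⟨8, by norm_num, 100000, fun dp dm hdm hmd hD hgap => ?_⟩
  have h : SkewedFixedPoint.Regime dp dm := ⟨hdm, hmd, hD, hgap⟩
  have hsum (p q : ℤ → ℝ) :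
      ∑ j ∈ ({1, -1} : Finset ℤ), |p j - q j| = |p 1 - q 1| + |p (-1) - q (-1)| :=
    Finset.sum_pair (by norm_num)
  obtain ⟨pstar, ⟨hprob, hskew⟩, hfix, huniq, hlim⟩ :=
    exists_fixedPoint_tendsto_iterate_of_coord_contraction (s := {1, -1}) (K := 1 / 16)
      (SkewedFixedPoint.isClosed_setOf_isProbOn3_and_skewed dp)
      (fun p hp => ⟨SkewedFixedPoint.isProbOn3_Twp hp.1 h.dp_pos.le hdm.le, h.skewed_Twp hp.1 hp.2⟩)
      (by norm_num) (by rw [Finset.card_pair (by norm_num)]; norm_num)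
      (fun p hp q hq z => hsum p q ▸ h.abs_Twp_sub_Twp_le hp.1 hp.2 hq.1 hq.2 z)
      ⟨SkewedFixedPoint.isProbOn3_delta1, SkewedFixedPoint.skewed_delta1 dp⟩
  exact ⟨pstar, ⟨hprob, hskew, hfix⟩, fun q hq hqs hqfix => huniq q ⟨hq, hqs⟩ hqfix,
    tendsto_pi_nhds.mp hlim⟩
end

section
/- There is an absolute constant c > 0 such that the following holds. Let d+ > d− > 0 satisfy d+ − d− ≥ c√(d+ ln d+) with d+ bounded below by a sufficiently large absolute constant, let G be a locally finite graph with σ : V(G) → {±1}, and let C be the core with restriction σ_C. Then for every v ∈ C, every neighbour w ∈ ∂v and every t ≥ 0: μ_{v→w}(t|G,σ) = σ(v) = μ_{v→w}(t|G,σ_C), where μ(·|G,σ) denotes Warning Propagation initialized with U = V(G) and μ(·|G,σ_C) denotes Warning Propagation initialized with U = C. -/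
open Filter Topology

attribute [local instance] Classical.propDecidable

set_option linter.unusedVariables false

/-!
A core vertex `v` has about `d₊` neighbours of its own sign and about `d₋` of the other sign,
each up to `(c/4)√(d₊ ln d₊)`, and at most `100` neighbours outside the core. Since
`d₊ - d₋ ≥ c√(d₊ ln d₊)`, the neighbours in the core of `v`'s sign outnumber all other
neighbours by a margin that grows with `d₊`. By induction on `t`, every core vertex sends its own
sign: in the sum defining `μ_{v→w}(t+1)` the core neighbours of `v`'s sign (other than `w`)
each contribute `σ(v)`, and the remaining terms, being in `[-1, 1]`, cannot overturn this. The
induction only needs the initial messages to equal `σ` on the core, which holds for both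
initialisations.
-/

open Finset

lemma abs_psiZ_le_one (x : ℤ) : |psiZ x| ≤ 1 := by
  unfold psiZ; rw [abs_le]; omega

lemma psiZ_eq_of_one_le_mul {s x : ℤ} (hs : s = 1 ∨ s = -1) (h : 1 ≤ s * x) : psiZ x = s := by
  unfold psiZ; rcases hs with rfl | rfl <;> omega

lemma card_filter_sub_card_filter_le_sum {ι : Type*} (s : Finset ι) (p : ι → Prop)
    [DecidablePred p] (f : ι → ℤ) (hp : ∀ i ∈ s, p i → f i = 1) (hf : ∀ i ∈ s, -1 ≤ f i) :
    (#{i ∈ s | p i} : ℤ) - #{i ∈ s | ¬p i} ≤ ∑ i ∈ s, f i := by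
  rw [← sum_filter_add_sum_filter_not s p]
  have hpos : ∑ i ∈ s with p i, f i = #{i ∈ s | p i} := by
    rw [sum_congr rfl fun i hi => hp i (mem_filter.1 hi).1 (mem_filter.1 hi).2]
    simp
  have hneg : -(#{i ∈ s | ¬p i} : ℤ) ≤ ∑ i ∈ s with ¬p i, f i := by
    simpa using card_nsmul_le_sum _ f (-1) fun i hi => hf i (mem_filter.1 hi).1
  omega

section WarningPropagation

variable {V : Type*} {G : SimpleGraph V} [∀ v : V, Fintype (G.neighborSet v)] {σ : V → ℤ}

lemma abs_wpMsg_le_one (hσ : ∀ x, |σ x| ≤ 1) (U : Set V) :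
    ∀ t v w, |wpMsg G U σ t v w| ≤ 1
  | 0, v, _ => by
    simp only [wpMsg]
    split_ifs
    · exact hσ v
    · simp
  | _ + 1, _, _ => abs_psiZ_le_one _

lemma ncard_setOf_adj_and (x : V) (p : V → Prop) [DecidablePred p] :
    {w | G.Adj x w ∧ p w}.ncard = #{w ∈ G.neighborFinset x | p w} := by
  rw [← Set.ncard_coe_finset]
  congr
  ext
  simp

variable (G σ) in
/-- The margin absorbs the excluded receiver of a message and arbitrary messages from the
neighbours outside `K`. -/
def HasSignMargin (K : Set V) (x : V) : Prop :=
  #{u ∈ G.neighborFinset x | σ x * σ u = -1} + 2 * #{u ∈ G.neighborFinset x | u ∉ K} + 2 ≤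
    #{u ∈ G.neighborFinset x | σ x * σ u = 1}

lemma psiZ_sum_eq_of_hasSignMargin (hσ : ∀ x, σ x = 1 ∨ σ x = -1) {K : Set V} {x : V}
    (hx : HasSignMargin G σ K x) (y : V) (m : V → ℤ) (hm : ∀ u, |m u| ≤ 1)
    (hmK : ∀ u ∈ K, m u = σ u) :
    psiZ (∑ u ∈ (G.neighborFinset x).erase y, m u) = σ x := by
  set N := (G.neighborFinset x).erase y
  set agree : V → Prop := fun u => u ∈ K ∧ σ x * σ u = 1
  have hagree : ∀ u ∈ N, agree u → σ x * m u = 1 := fun u _ hu => by rw [hmK u hu.1, hu.2]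
  have hbound : ∀ u ∈ N, -1 ≤ σ x * m u := fun u _ => by
    refine neg_le_of_abs_le ?_
    rw [abs_mul, show |σ x| = 1 by rcases hσ x with h | h <;> simp [h], one_mul]
    exact hm u
  have hcount := card_filter_sub_card_filter_le_sum N agree _ hagree hbound
  have hagree_card : #{u ∈ G.neighborFinset x | σ x * σ u = 1} ≤
      #{u ∈ N | agree u} + 1 + #{u ∈ G.neighborFinset x | u ∉ K} := by
    have hsub : {u ∈ G.neighborFinset x | σ x * σ u = 1} ⊆
        insert y {u ∈ N | agree u} ∪ {u ∈ G.neighborFinset x | u ∉ K} := fun u hu => by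
      simp only [mem_filter, mem_union, mem_insert, mem_erase, N, agree] at hu ⊢
      tauto
    grw [card_le_card hsub, card_union_le, card_insert_le]
  have hdisagree_card : #{u ∈ N | ¬agree u} ≤
      #{u ∈ G.neighborFinset x | σ x * σ u = -1} + #{u ∈ G.neighborFinset x | u ∉ K} := by
    refine (card_le_card fun u hu => ?_).trans (card_union_le _ _)
    simp only [mem_filter, mem_union, mem_erase, N, agree] at hu ⊢
    by_cases huK : u ∈ K
    · left
      refine ⟨hu.1.2, ?_⟩
      rcases hσ x with h | h <;> rcases hσ u with h' | h' <;> simp_all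
    · exact Or.inr ⟨hu.1.2, huK⟩
  apply psiZ_eq_of_one_le_mul (hσ x)
  rw [mul_sum]
  unfold HasSignMargin at hx
  omega

theorem wpMsg_eq_of_hasSignMargin (hσ : ∀ x, σ x = 1 ∨ σ x = -1) {K U : Set V} (hKU : K ⊆ U)
    (hK : ∀ x ∈ K, HasSignMargin G σ K x) : ∀ t, ∀ x ∈ K, ∀ y, wpMsg G U σ t x y = σ x
  | 0, x, hx, _ => by simp [wpMsg, hKU hx]
  | t + 1, x, hx, y =>
    psiZ_sum_eq_of_hasSignMargin hσ (hK x hx) y _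
      (fun u => abs_wpMsg_le_one (fun v => by rcases hσ v with h | h <;> simp [h]) U t u x)
      (fun u hu => wpMsg_eq_of_hasSignMargin hσ hKU hK t u hu x)

lemma coreProp_coreSet (dp dm c : ℝ) : CoreProp G σ dp dm c (coreSet G σ dp dm c) := by
  rintro u ⟨U, hU, huU⟩
  obtain ⟨hplus, hminus, hout⟩ := hU u huU
  refine ⟨hplus, hminus, le_trans (Set.ncard_le_ncard ?_ ?_) hout⟩
  · exact Set.sdiff_subset_sdiff_right (Set.subset_sUnion_of_mem hU)
  · exact (G.neighborSet u).toFinite.sdiff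

lemma hasSignMargin_of_coreProp {dp dm c : ℝ} {K : Set V} (hK : CoreProp G σ dp dm c K)
    (hgap : c * √(dp * Real.log dp) ≤ dp - dm) (hlarge : 404 ≤ c * √(dp * Real.log dp)) :
    ∀ x ∈ K, HasSignMargin G σ K x := by
  intro x hx
  obtain ⟨hplus, hminus, hout⟩ := hK x hx
  rw [ncard_setOf_adj_and] at hplus hminus
  rw [show {w | G.Adj x w} \ K = {w | G.Adj x w ∧ w ∉ K} from rfl, ncard_setOf_adj_and] at hout
  have hout' : (#{u ∈ G.neighborFinset x | u ∉ K} : ℝ) ≤ 100 := by exact_mod_cast hout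
  unfold HasSignMargin
  rw [abs_le] at hplus hminus
  exact_mod_cast (by linarith [hplus.1, hminus.2] :
    (#{u ∈ G.neighborFinset x | σ x * σ u = -1} : ℝ) +
      2 * #{u ∈ G.neighborFinset x | u ∉ K} + 2 ≤ #{u ∈ G.neighborFinset x | σ x * σ u = 1})

end WarningPropagation

lemma le_sqrt_mul_log_of_sq_le {a x : ℝ} (ha : 0 ≤ a) (hx : 3 ≤ x) (hax : a ^ 2 ≤ x) :
    a ≤ √(x * Real.log x) := by
  have hlog : 1 ≤ Real.log x :=
    (Real.le_log_iff_exp_le (by linarith)).2 (by linarith [Real.exp_one_lt_d9])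
  rw [Real.le_sqrt ha (by nlinarith)]
  nlinarith

/-- Lemma 3.1: for any `v` in the core and any neighbour `w` of `v`,
`μ_{v→w}(t|G,σ) = σ(v) = μ_{v→w}(t|G,σ_C)` for all `t ≥ 0`. -/
theorem core_messages_frozen :
    ∃ c : ℝ, 0 < c ∧ ∃ D : ℝ, ∀ dp dm : ℝ,
    0 < dm → dm < dp → D ≤ dp → c * Real.sqrt (dp * Real.log dp) ≤ dp - dm →
    ∀ (V : Type*) (G : SimpleGraph V) [∀ v : V, Fintype (G.neighborSet v)] (σ : V → ℤ),
    (∀ x : V, σ x = 1 ∨ σ x = -1) →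
    ∀ K : Set V, K = coreSet G σ dp dm c →
    ∀ v ∈ K, ∀ w : V, G.Adj v w → ∀ t : ℕ,
      wpMsg G Set.univ σ t v w = σ v ∧ wpMsg G K σ t v w = σ v := by
  refine ⟨1, one_pos, 404 ^ 2, ?_⟩
  intro dp dm _ _ hD hgap V G _ σ hσ K hK v hv w _ t
  have hlarge : 404 ≤ 1 * √(dp * Real.log dp) := by
    rw [one_mul]
    exact le_sqrt_mul_log_of_sq_le (by norm_num) (by linarith) hD
  have hmargin := hasSignMargin_of_coreProp (hK ▸ coreProp_coreSet dp dm 1) hgap hlarge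
  exact ⟨wpMsg_eq_of_hasSignMargin hσ (Set.subset_univ K) hmargin t v hv w,
    wpMsg_eq_of_hasSignMargin hσ subset_rfl hmargin t v hv w⟩
end
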